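/- arXiv:1204.1884 — 8 statements merged into one kernel-verified Lean document; each statement's English description precedes it below -/
import Mathlib

section
/- For every ε > 0 there is a δ > 0 such that whenever V is a finite set and G is a graph on vertex set V (a set of 2-element subsets of V) containing at most δ·|V|^3 triangles (a triangle being a 3-element set {x,y,z} ⊆ V with {x,y}, {x,z}, {y,z} all in G), there is a set C ⊆ G with |C| ≤ ε·|V|^2 such that the graph G ∖ C contains no triangles at all. -/
/-!
Regard `G` as the simple graph `ofPairs G` whose adjacent vertices are the pairs lying in `G`; its
triangles are exactly the triangles of `G`. The triangle removal lemma for simple graphs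
(Szemerédi regularity) yields a triangle-free subgraph `H` differing from it in at most `ε·|V|^2`
edges; the missing edges, read back as pairs, form `C`.
-/

open scoped Classical
open Finset

namespace SimpleGraph

variable {V : Type*}

def ofPairs (G : Finset (Finset V)) : SimpleGraph V where
  Adj x y := x ≠ y ∧ {x, y} ∈ G
  symm := ⟨fun x y h => ⟨h.1.symm, pair_comm x y ▸ h.2⟩⟩
  loopless := ⟨fun _ h => h.1 rfl⟩

@[simp]
theorem ofPairs_adj {G : Finset (Finset V)} {x y : V} :
    (ofPairs G).Adj x y ↔ x ≠ y ∧ {x, y} ∈ G :=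
  Iff.rfl

theorem cliqueFinset_three_ofPairs [Fintype V] (G : Finset (Finset V)) :
    (ofPairs G).cliqueFinset 3 =
      univ.filter (fun t => t.card = 3 ∧ ∀ e ⊆ t, e.card = 2 → e ∈ G) := by
  ext t
  simp only [mem_filter, mem_univ, true_and, mem_cliqueFinset_iff, isNClique_iff,
    isClique_iff, Set.Pairwise, mem_coe, ofPairs_adj]
  constructor
  · rintro ⟨hclique, hcard⟩
    refine ⟨hcard, fun e het he => ?_⟩
    obtain ⟨x, y, hxy, rfl⟩ := card_eq_two.1 he
    exact (hclique (het (mem_insert_self x {y})) (het (by simp)) hxy).2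
  · rintro ⟨hcard, hpairs⟩
    exact ⟨fun x hx y hy hxy => ⟨hxy, hpairs _ (insert_subset hx (by simpa)) (card_pair hxy)⟩,
      hcard⟩

theorem exists_subset_card_le_ofPairs_sdiff_le [Fintype V] (G : Finset (Finset V))
    (H : SimpleGraph V) [DecidableRel H.Adj] :
    ∃ C ⊆ G, #C ≤ #((ofPairs G).edgeFinset \ H.edgeFinset) ∧ ofPairs (G \ C) ≤ H := by
  refine ⟨((ofPairs G).edgeFinset \ H.edgeFinset).image Sym2.toFinset, ?_, card_image_le, ?_⟩
  · intro e he
    obtain ⟨z, hz, rfl⟩ := mem_image.1 he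
    induction z using Sym2.ind with
    | _ x y =>
      rw [Sym2.toFinset_mk_eq]
      exact (mem_edgeFinset.1 (mem_sdiff.1 hz).1).2
  · rintro x y ⟨hxy, hGC⟩
    obtain ⟨hG, hC⟩ := mem_sdiff.1 hGC
    by_contra hH
    exact hC (mem_image.2 ⟨s(x, y), by simp [hxy, hG, hH], Sym2.toFinset_mk_eq⟩)

variable [Fintype V] [DecidableEq V]

theorem exists_le_cliqueFree_three_of_card_cliqueFinset_le {ε : ℝ} (hε : 0 < ε)
    (G : SimpleGraph V) [DecidableRel G.Adj]
    (hG : (#(G.cliqueFinset 3) : ℝ) ≤ triangleRemovalBound ε / 2 * Fintype.card V ^ 3) :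
    ∃ H ≤ G, ∃ _ : DecidableRel H.Adj,
      (#G.edgeFinset - #H.edgeFinset : ℝ) ≤ ε * Fintype.card V ^ 2 ∧ H.CliqueFree 3 := by
  rcases (Fintype.card V).eq_zero_or_pos with hV | hV
  · exact ⟨G, le_rfl, inferInstance, by simp [hV], cliqueFree_of_card_lt (by omega)⟩
  · have hbound := triangleRemovalBound_pos hε
    obtain ⟨H, hHG, hdec, hH, hfree⟩ := triangle_removal (ε := ε) (G := G) (by
      calc (#(G.cliqueFinset 3) : ℝ) ≤ triangleRemovalBound ε / 2 * Fintype.card V ^ 3 := hG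
        _ < triangleRemovalBound ε * Fintype.card V ^ 3 := by gcongr; linarith)
    exact ⟨H, hHG, hdec, by exact_mod_cast hH.le, hfree⟩

end SimpleGraph

open SimpleGraph

/-- **Triangle removal lemma.** For every `ε > 0` there is `δ > 0` such that any graph `G`
(a set of 2-element subsets of a finite vertex set `V`) with at most `δ·|V|^3` triangles
can be made triangle-free by removing a set `C ⊆ G` of at most `ε·|V|^2` edges. -/
theorem triangle_removal :
    ∀ ε : ℝ, 0 < ε → ∃ δ : ℝ, 0 < δ ∧
      ∀ (V : Type) [Fintype V] (G : Finset (Finset V)),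
        (∀ e ∈ G, e.card = 2) →
        (((Finset.univ : Finset (Finset V)).filter
            (fun t => t.card = 3 ∧ ∀ e ⊆ t, e.card = 2 → e ∈ G)).card : ℝ)
          ≤ δ * (Fintype.card V : ℝ) ^ 3 →
        ∃ C ⊆ G, (C.card : ℝ) ≤ ε * (Fintype.card V : ℝ) ^ 2 ∧
          ((Finset.univ : Finset (Finset V)).filter
            (fun t => t.card = 3 ∧ ∀ e ⊆ t, e.card = 2 → e ∈ G \ C)).card = 0 := by
  intro ε hε
  refine ⟨triangleRemovalBound ε / 2, by positivity, fun V _ G _ hG => ?_⟩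
  rw [← cliqueFinset_three_ofPairs] at hG
  obtain ⟨H, hHG, _, hH, hHfree⟩ :=
    exists_le_cliqueFree_three_of_card_cliqueFinset_le hε (ofPairs G) hG
  obtain ⟨C, hCG, hC, hCH⟩ := exists_subset_card_le_ofPairs_sdiff_le G H
  refine ⟨C, hCG, ?_, ?_⟩
  · calc (#C : ℝ) ≤ #((ofPairs G).edgeFinset \ H.edgeFinset) := by exact_mod_cast hC
      _ = #(ofPairs G).edgeFinset - #H.edgeFinset := cast_card_sdiff (edgeFinset_mono hHG)
      _ ≤ ε * Fintype.card V ^ 2 := hH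
  · rw [← cliqueFinset_three_ofPairs, card_eq_zero, cliqueFinset_eq_empty_iff]
    exact hHfree.anti hCH
end

section
/- Let L be a first-order language, M an L-structure, V a finite set, and for each J ⊆ V let ν^J be a probability measure on (M^J, B_J). Suppose that for every J ⊆ V and every bounded B_V-measurable f : M^V → ℝ: each slice x_J ↦ f(x_J ∪ x_{V∖J}) is B_J-measurable, the function x_{V∖J} ↦ ∫ f(x_J ∪ x_{V∖J}) dν^J(x_J) is B_{V∖J}-measurable, and ∫ f dν^V = ∫ (∫ f(x_J ∪ x_{V∖J}) dν^J(x_J)) dν^{V∖J}(x_{V∖J}). Then ν^V has J-regularity for every J ⊆ V. -/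
open FirstOrder MeasureTheory
open scoped Classical

/-- `defCyl L M I` is the Boolean algebra `B⁰_{V,I}` of subsets of `M^V` of the form
`{x : V → M | x|_I ∈ D}` with `D ⊆ M^I` definable with parameters from `M`. -/
def defCyl (L : FirstOrder.Language) (M : Type*) [L.Structure M] {V : Type*} (I : Set V) :
    Set (Set (V → M)) :=
  {S | ∃ D : Set (↥I → M), (Set.univ : Set M).Definable L D ∧
    S = {x : V → M | (fun i : ↥I => x ↑i) ∈ D}}

/-- `sigmaAlg L M 𝓘` is the σ-algebra `B_{V,𝓘}` on `M^V` generated by `⋃_{I ∈ 𝓘} B⁰_{V,I}`. -/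
def sigmaAlg (L : FirstOrder.Language) (M : Type*) [L.Structure M] {V : Type*}
    (𝓘 : Set (Set V)) : MeasurableSpace (V → M) :=
  MeasurableSpace.generateFrom (⋃ I ∈ 𝓘, defCyl L M I)

/-- The σ-algebra `B_V` on `M^V`. -/
def BV (L : FirstOrder.Language) (M : Type*) [L.Structure M] (V : Type*) :
    MeasurableSpace (V → M) :=
  sigmaAlg L M ({Set.univ} : Set (Set V))

/-- A probability measure `ν` on `(M^V, B_V)` has `J`-regularity. -/
def HasJRegularity (L : FirstOrder.Language) (M : Type*) [L.Structure M] (V : Type*)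
    [Fintype V] (ν : @Measure (V → M) (BV L M V)) (J : Set V) : Prop :=
  ∀ 𝓘 : Finset (Set V), (∀ I ∈ 𝓘, I ∩ J ⊂ I) →
  ∀ f : Set V → (V → M) → ℝ,
    (∀ I ∈ 𝓘, (∃ C, ∀ x, |f I x| ≤ C) ∧
      Measurable[sigmaAlg L M ({I} : Set (Set V))] (f I)) →
  ∀ g : (V → M) → ℝ, (∃ C, ∀ x, |g x| ≤ C) →
    Measurable[sigmaAlg L M ({J} : Set (Set V))] g →
    ∫ x, (g x - MeasureTheory.condExp
        (sigmaAlg L M {K : Set V | ∃ I ∈ 𝓘, K ⊆ I ∩ J}) ν g x) *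
      ∏ I ∈ 𝓘, f I x ∂ν = 0

/-- `combine J a b` is the tuple `x_J ∪ x_{V∖J} : V → M` built from `a : M^J` and
`b : M^{V∖J}`. -/
noncomputable def combine {V M : Type*} (J : Set V) (a : ↥J → M) (b : ↥(Jᶜ) → M) :
    V → M :=
  fun v => if h : v ∈ J then a ⟨v, h⟩ else b ⟨v, h⟩

/-!
Fix `J` and let `π : M^V → M^J` be the restriction. The σ-algebras `B_{V,J}` and
`B_{V,𝓘∧J}` are the pullbacks along `π` of `B_J` and of the σ-algebra `𝓝` on `M^J` generated
by the cylinders over the sets `I ∩ J`, so `g = G ∘ π`. Applied to indicators, the Fubini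
decomposition gives `π_* ν^V = ν^J`, whence `E[g | B_{V,𝓘∧J}] = E_{ν^J}[G | 𝓝] ∘ π`. Applied
once more, it turns the integral into
`∫∫ (G - E[G | 𝓝])(x_J) · ∏ f_I(x_J ∪ x_{V∖J}) dν^J dν^{V∖J}`. For fixed `x_{V∖J}` the product
is `𝓝`-measurable in `x_J`, because a slice of a definable cylinder over `I` is a cylinder over
`I ∩ J` definable with the coordinates of `x_{V∖J}` as parameters; so the inner integral vanishes.
-/

section BoundedFunctions

variable {X : Type*}

theorem exists_abs_mul_le {f g : X → ℝ} (hf : ∃ C, ∀ x, |f x| ≤ C) (hg : ∃ C, ∀ x, |g x| ≤ C) :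
    ∃ C, ∀ x, |f x * g x| ≤ C := by
  obtain ⟨Cf, hCf⟩ := hf
  obtain ⟨Cg, hCg⟩ := hg
  refine ⟨Cf * Cg, fun x => ?_⟩
  rw [abs_mul]
  exact mul_le_mul (hCf x) (hCg x) (abs_nonneg _) ((abs_nonneg _).trans (hCf x))

theorem exists_abs_prod_le {ι : Type*} (s : Finset ι) {f : ι → X → ℝ}
    (hf : ∀ i ∈ s, ∃ C, ∀ x, |f i x| ≤ C) : ∃ C, ∀ x, |∏ i ∈ s, f i x| ≤ C := by
  induction s using Finset.induction_on with
  | empty => exact ⟨1, fun x => by simp⟩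
  | insert i s hi ih =>
    simp only [Finset.prod_insert hi]
    exact exists_abs_mul_le (hf i (s.mem_insert_self i))
      (ih fun j hj => hf j (Finset.mem_insert_of_mem hj))

end BoundedFunctions

section ConditionalExpectation

variable {α : Type*} {m : MeasurableSpace α} [mα : MeasurableSpace α] {μ : Measure α}

theorem exists_abs_le_ae_eq_condExp {f : α → ℝ} {C : ℝ} (hf : ∀ x, |f x| ≤ C) :
    ∃ f' : α → ℝ, StronglyMeasurable[m] f' ∧ (∀ x, |f' x| ≤ C) ∧ f' =ᵐ[μ] μ[f | m] := by
  refine ⟨fun x => max (-C) (min C (μ[f | m] x)), ?_, fun x => ?_, ?_⟩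
  · exact (measurable_const.max (measurable_const.min
      stronglyMeasurable_condExp.measurable)).stronglyMeasurable
  · have hC : 0 ≤ C := (abs_nonneg _).trans (hf x)
    exact abs_le.2 ⟨le_max_left _ _, max_le (by linarith) (min_le_left _ _)⟩
  · filter_upwards [ae_bdd_abs_condExp_of_ae_bdd_abs (m := m) (ae_of_all μ hf)] with x hx
    rw [min_eq_right (abs_le.1 hx).2, max_eq_right (abs_le.1 hx).1]

theorem integral_sub_condExp_mul_eq_zero [IsFiniteMeasure μ] (hm : m ≤ mα) {f φ : α → ℝ}
    (hf : Integrable f μ) (hφ : StronglyMeasurable[m] φ) {C : ℝ} (hφC : ∀ x, |φ x| ≤ C) :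
    ∫ x, (f x - μ[f | m] x) * φ x ∂μ = 0 := by
  have hφC' : ∀ᵐ x ∂μ, ‖φ x‖ ≤ C := ae_of_all _ hφC
  have hφ_ae : AEStronglyMeasurable φ μ := (hφ.mono hm).aestronglyMeasurable
  have hpull : ∫ x, φ x * f x ∂μ = ∫ x, φ x * μ[f | m] x ∂μ := by
    rw [← integral_condExp hm]
    exact integral_congr_ae (condExp_stronglyMeasurable_mul_of_bound hm hφ hf C hφC')
  calc ∫ x, (f x - μ[f | m] x) * φ x ∂μ = ∫ x, φ x * f x - φ x * μ[f | m] x ∂μ := by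
        congr with x
        ring
    _ = 0 := by
        rw [integral_sub (hf.bdd_mul hφ_ae hφC') (integrable_condExp.bdd_mul hφ_ae hφC'), hpull,
          sub_self]

variable {γ : Type*} [mγ : MeasurableSpace γ]

theorem condExp_comp_ae_eq {μ : Measure γ} [IsFiniteMeasure μ] {π : γ → α} (hπ : Measurable π)
    (hm : m ≤ mα) {f : α → ℝ} (hf : Integrable f (μ.map π)) :
    μ[f ∘ π | m.comap π] =ᵐ[μ] (μ.map π)[f | m] ∘ π := by
  have hmπ : m.comap π ≤ mγ := (MeasurableSpace.comap_mono hm).trans hπ.comap_le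
  have hπ_int {g : α → ℝ} (hg : Integrable g (μ.map π)) : Integrable (g ∘ π) μ :=
    (integrable_map_measure hg.aestronglyMeasurable hπ.aemeasurable).1 hg
  refine (ae_eq_condExp_of_forall_setIntegral_eq hmπ (hπ_int hf)
    (fun _ _ _ => (hπ_int integrable_condExp).integrableOn) ?_ ?_).symm
  · rintro _ ⟨t, ht, rfl⟩ -
    simp only [Function.comp_apply]
    rw [← setIntegral_map (hm t ht) (stronglyMeasurable_condExp.mono hm).aestronglyMeasurable
        hπ.aemeasurable,
      ← setIntegral_map (hm t ht) hf.aestronglyMeasurable hπ.aemeasurable,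
      setIntegral_condExp hm hf ht]
  · exact (stronglyMeasurable_condExp.comp_measurable
      (measurable_iff_comap_le.2 le_rfl)).aestronglyMeasurable

end ConditionalExpectation

theorem Measurable.eq_comp_of_rightInverse {X Y Z : Type*} [mY : MeasurableSpace Y]
    [MeasurableSpace Z] [MeasurableSingletonClass Z] {f : X → Y} {s : Y → X}
    (hs : Function.RightInverse s f) {g : X → Z} (hg : Measurable[mY.comap f] g) :
    Measurable (g ∘ s) ∧ g = (g ∘ s) ∘ f := by
  have hs_meas : @Measurable Y X mY (mY.comap f) s := by
    rw [measurable_iff_comap_le, MeasurableSpace.comap_comp, hs.id, MeasurableSpace.comap_id]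
  exact ⟨hg.comp hs_meas, funext fun x => hg.factorsThrough (hs (f x)).symm⟩

section IteratedIntegral

variable {α β γ : Type*} {n : MeasurableSpace α} [mα : MeasurableSpace α] [MeasurableSpace β]
  [MeasurableSpace γ]

def IsFubiniDecomposition (μ : Measure γ) (μα : Measure α) (μβ : Measure β)
    (comb : α → β → γ) : Prop :=
  ∀ f : γ → ℝ, (∃ C, ∀ x, |f x| ≤ C) → Measurable f →
    ∫ x, f x ∂μ = ∫ b, ∫ a, f (comb a b) ∂μα ∂μβ

variable {μ : Measure γ} {μα : Measure α} {μβ : Measure β} {comb : α → β → γ} {π : γ → α}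
  [IsFiniteMeasure μ] [IsFiniteMeasure μα] [IsProbabilityMeasure μβ]

theorem IsFubiniDecomposition.map_eq (hFub : IsFubiniDecomposition μ μα μβ comb)
    (hπ : Measurable π) (hcomb : ∀ a b, π (comb a b) = a) : μ.map π = μα := by
  ext s hs
  have hslice : ∀ a b, (π ⁻¹' s).indicator (1 : γ → ℝ) (comb a b) = s.indicator 1 a :=
    fun a b => by simp [Set.indicator_apply, hcomb]
  have hbdd : ∀ x, |(π ⁻¹' s).indicator (1 : γ → ℝ) x| ≤ 1 := fun x => by
    by_cases hx : x ∈ π ⁻¹' s <;> simp [hx]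
  have h := hFub _ ⟨1, hbdd⟩ (measurable_one.indicator (hπ hs))
  simp only [hslice, integral_indicator_one hs, integral_indicator_one (hπ hs), integral_const,
    probReal_univ, one_smul] at h
  rw [Measure.map_apply hπ hs, ← measureReal_eq_measureReal_iff, h]

theorem IsFubiniDecomposition.integral_sub_condExp_comap_mul_eq_zero
    (hFub : IsFubiniDecomposition μ μα μβ comb) (hπ : Measurable π)
    (hcomb : ∀ a b, π (comb a b) = a) (hn : n ≤ mα) {f : α → ℝ} (hf : Measurable f)
    (hf_bdd : ∃ C, ∀ a, |f a| ≤ C) {φ : γ → ℝ} (hφ : Measurable φ)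
    (hφ_bdd : ∃ C, ∀ x, |φ x| ≤ C) (hφ_slice : ∀ b, Measurable[n] fun a => φ (comb a b)) :
    ∫ x, (f (π x) - μ[f ∘ π | n.comap π] x) * φ x ∂μ = 0 := by
  obtain ⟨Cf, hCf⟩ := hf_bdd
  obtain ⟨Cφ, hCφ⟩ := hφ_bdd
  have hmap : μ.map π = μα := hFub.map_eq hπ hcomb
  have hf_int : Integrable f μα := .of_bound hf.aestronglyMeasurable Cf (ae_of_all _ hCf)
  obtain ⟨f', hf'_meas, hf'_bdd, hf'_ae⟩ := exists_abs_le_ae_eq_condExp (m := n) (μ := μα) hCf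
  have hce : μ[f ∘ π | n.comap π] =ᵐ[μ] f' ∘ π := by
    refine (condExp_comp_ae_eq hπ hn (hmap ▸ hf_int)).trans ?_
    exact ae_of_ae_map hπ.aemeasurable (hmap ▸ hf'_ae.symm)
  have hdiff_bdd : ∃ C, ∀ x, |(f (π x) - f' (π x)) * φ x| ≤ C :=
    exists_abs_mul_le ⟨Cf + Cf, fun x => (abs_sub _ _).trans (add_le_add (hCf _) (hf'_bdd _))⟩
      ⟨Cφ, hCφ⟩
  have hdiff : Measurable fun x => (f (π x) - f' (π x)) * φ x :=
    ((hf.comp hπ).sub ((hf'_meas.mono hn).measurable.comp hπ)).mul hφ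
  calc ∫ x, (f (π x) - μ[f ∘ π | n.comap π] x) * φ x ∂μ
      = ∫ x, (f (π x) - f' (π x)) * φ x ∂μ :=
        integral_congr_ae (hce.mono fun x hx => by simp only [hx, Function.comp_apply])
    _ = ∫ b, ∫ a, (f a - f' a) * φ (comb a b) ∂μα ∂μβ := by
        simp only [hFub _ hdiff_bdd hdiff, hcomb]
    _ = ∫ b, ∫ a, (f a - μα[f | n] a) * φ (comb a b) ∂μα ∂μβ := by
        congr 1 with b
        exact integral_congr_ae (hf'_ae.mono fun a ha => by simp only [ha])
    _ = 0 := by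
        simp only [integral_sub_condExp_mul_eq_zero hn hf_int (hφ_slice _).stronglyMeasurable
          (fun a => hCφ (comb a _)), integral_zero]

end IteratedIntegral

section Cylinders

variable {L : FirstOrder.Language} {M : Type*} [L.Structure M] {V : Type*}

theorem defCyl_mono {K K' : Set V} (h : K ⊆ K') : defCyl L M K ⊆ defCyl L M K' := by
  rintro S ⟨D, hD, rfl⟩
  exact ⟨(fun g : K' → M => g ∘ Set.inclusion h) ⁻¹' D, hD.preimage_comp _, rfl⟩

theorem sigmaAlg_mono {𝓘₁ 𝓘₂ : Set (Set V)} (h : ∀ K ∈ 𝓘₁, ∃ K' ∈ 𝓘₂, K ⊆ K') :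
    sigmaAlg L M 𝓘₁ ≤ sigmaAlg L M 𝓘₂ := by
  refine MeasurableSpace.generateFrom_le fun S hS => ?_
  obtain ⟨K, hK, hSK⟩ := Set.mem_iUnion₂.1 hS
  obtain ⟨K', hK', hKK'⟩ := h K hK
  exact MeasurableSpace.measurableSet_generateFrom
    (Set.mem_iUnion₂.2 ⟨K', hK', defCyl_mono hKK' hSK⟩)

theorem sigmaAlg_le_BV (𝓘 : Set (Set V)) : sigmaAlg L M 𝓘 ≤ BV L M V :=
  sigmaAlg_mono fun K _ => ⟨Set.univ, rfl, Set.subset_univ K⟩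

theorem defCyl_eq_of_equiv {I : Set V} {K : Type*} (e : K ≃ I) :
    defCyl L M I = {S | ∃ D : Set (K → M), (Set.univ : Set M).Definable L D ∧
      S = {x : V → M | (fun k => x (e k)) ∈ D}} := by
  ext S
  constructor
  · rintro ⟨D, hD, rfl⟩
    refine ⟨(fun g : K → M => g ∘ e.symm) ⁻¹' D, hD.preimage_comp _, ?_⟩
    ext x
    simp [Function.comp_def]
  · rintro ⟨D, hD, rfl⟩
    exact ⟨(fun g : I → M => g ∘ e) ⁻¹' D, hD.preimage_comp _, rfl⟩

theorem image_preimage_domRestrict_defCyl (J : Set V) (K : Set J) :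
    (J.domRestrict ⁻¹' ·) '' defCyl L M K = defCyl L M (Subtype.val '' K) := by
  rw [defCyl_eq_of_equiv (Equiv.Set.image Subtype.val K Subtype.val_injective)]
  ext T
  constructor
  · rintro ⟨_, ⟨D, hD, rfl⟩, rfl⟩
    exact ⟨D, hD, rfl⟩
  · rintro ⟨D, hD, rfl⟩
    exact ⟨_, ⟨D, hD, rfl⟩, rfl⟩

theorem comap_domRestrict_sigmaAlg (J : Set V) (𝓙 : Set (Set J)) :
    (sigmaAlg L M 𝓙).comap J.domRestrict = sigmaAlg L M (Set.image Subtype.val '' 𝓙) := by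
  simp only [sigmaAlg, MeasurableSpace.comap_generateFrom, Set.image_iUnion₂,
    image_preimage_domRestrict_defCyl, Set.biUnion_image]

theorem comap_domRestrict_BV (J : Set V) :
    (BV L M J).comap J.domRestrict = sigmaAlg L M {J} := by
  rw [BV, comap_domRestrict_sigmaAlg, Set.image_singleton, Subtype.coe_image_univ]

theorem sigmaAlg_subsets_inter_eq_comap_domRestrict (J : Set V) (𝓘 : Set (Set V)) :
    sigmaAlg L M {K | ∃ I ∈ 𝓘, K ⊆ I ∩ J} =
      (sigmaAlg L M (Set.preimage Subtype.val '' 𝓘 : Set (Set J))).comap J.domRestrict := by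
  rw [comap_domRestrict_sigmaAlg]
  apply le_antisymm <;> apply sigmaAlg_mono
  · rintro K ⟨I, hI, hK⟩
    refine ⟨_, ⟨_, ⟨I, hI, rfl⟩, rfl⟩, ?_⟩
    rwa [Subtype.image_preimage_coe, Set.inter_comm]
  · rintro _ ⟨_, ⟨I, hI, rfl⟩, rfl⟩
    refine ⟨_, ⟨I, hI, ?_⟩, subset_rfl⟩
    rw [Subtype.image_preimage_coe, Set.inter_comm]

theorem domRestrict_combine (J : Set V) (a : J → M) (b : ↥Jᶜ → M) :
    J.domRestrict (combine J a b) = a :=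
  funext fun j => by simp [Set.domRestrict, combine, j.2]

theorem measurable_combine_left (J I : Set V) [Finite I] (b : ↥Jᶜ → M) :
    @Measurable (J → M) (V → M) (sigmaAlg L M {Subtype.val ⁻¹' I}) (sigmaAlg L M {I})
      (fun a => combine J a b) := by
  refine @measurable_generateFrom _ _ (sigmaAlg L M {Subtype.val ⁻¹' I}) _ _ ?_
  simp only [Set.mem_singleton_iff, Set.iUnion_iUnion_eq_left]
  rintro _ ⟨D, hD, rfl⟩
  apply MeasurableSpace.measurableSet_generateFrom
  simp only [Set.mem_singleton_iff, Set.iUnion_iUnion_eq_left]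
  let F : ((Subtype.val ⁻¹' I : Set J) → M) → I → M := fun c i =>
    if h : (i : V) ∈ J then c ⟨⟨i, h⟩, i.2⟩ else b ⟨i, h⟩
  refine ⟨F ⁻¹' D, hD.preimage_map fun i => ?_, ?_⟩
  · by_cases h : (i : V) ∈ J
    · simpa only [F, dif_pos h] using Set.DefinableFun.proj (L := L) (A := Set.univ)
    · simpa only [F, dif_neg h] using L.definableFun_const _ (Set.mem_univ (b ⟨i, h⟩))
  · ext a
    simp [F, combine]

end Cylinders

/-- If the family of probability measures `ν^J` on `(M^J, B_J)` satisfies the Fubini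
decomposition `∫ f dν^V = ∫∫ f dν^J dν^{V∖J}` (with measurable slices), then `ν^V` has
`J`-regularity for every `J ⊆ V`. -/
theorem product_regular (L : FirstOrder.Language) (M : Type*) [L.Structure M]
    (V : Type*) [Fintype V]
    (νV : @Measure (V → M) (BV L M V)) (hνV : IsProbabilityMeasure νV)
    (ν : (J : Set V) → @Measure (↥J → M) (BV L M ↥J))
    (hν : ∀ J, IsProbabilityMeasure (ν J))
    (hFub : ∀ (J : Set V) (f : (V → M) → ℝ),
      (∃ C, ∀ x, |f x| ≤ C) → Measurable[BV L M V] f →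
      (∀ b : ↥(Jᶜ) → M, Measurable[BV L M ↥J] (fun a => f (combine J a b))) ∧
      Measurable[BV L M ↥(Jᶜ)] (fun b => ∫ a, f (combine J a b) ∂(ν J)) ∧
      ∫ x, f x ∂νV = ∫ b, (∫ a, f (combine J a b) ∂(ν J)) ∂(ν (Jᶜ))) :
    ∀ J : Set V, HasJRegularity L M V νV J := by
  intro J 𝓘 _ f hf g hg_bdd hg
  set n := sigmaAlg L M (Set.preimage Subtype.val '' (𝓘 : Set (Set V)) : Set (Set J))
  let := BV L M V
  let := BV L M J
  let := BV L M ↥Jᶜ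
  have := hν J
  have := hν Jᶜ
  obtain ⟨Cg, hCg⟩ := hg_bdd
  obtain ⟨b₀⟩ := nonempty_of_isProbabilityMeasure (ν Jᶜ)
  have hm : sigmaAlg L M {K | ∃ I ∈ 𝓘, K ⊆ I ∩ J} = n.comap J.domRestrict := by
    simpa only [Finset.mem_coe] using sigmaAlg_subsets_inter_eq_comap_domRestrict (M := M) J 𝓘
  have hπ : Measurable (J.domRestrict : (V → M) → J → M) :=
    measurable_iff_comap_le.2 ((comap_domRestrict_BV (L := L) J).trans_le (sigmaAlg_le_BV _))
  rw [← comap_domRestrict_BV (L := L)] at hg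
  obtain ⟨hG, hgG⟩ := hg.eq_comp_of_rightInverse (domRestrict_combine J · b₀)
  have hF_slice : ∀ b, Measurable[n] fun a => ∏ I ∈ 𝓘, f I (combine J a b) :=
    fun b => Finset.measurable_prod _ fun I hI => (hf I hI).2.comp
      ((measurable_combine_left J I b).mono
        (sigmaAlg_mono fun K hK => ⟨K, ⟨I, hI, hK.symm⟩, subset_rfl⟩) le_rfl)
  rw [hm, hgG]
  exact IsFubiniDecomposition.integral_sub_condExp_comap_mul_eq_zero
    (fun φ hφ_bdd hφ => (hFub J φ hφ_bdd hφ).2.2) hπ (domRestrict_combine J) (sigmaAlg_le_BV _)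
    hG ⟨Cg, fun a => hCg _⟩
    (Finset.measurable_prod _ fun I hI => (hf I hI).2.mono (sigmaAlg_le_BV _) le_rfl)
    (exists_abs_prod_le 𝓘 fun I hI => (hf I hI).1) hF_slice
end

section
/- Let f : X → ℝ be bounded and measurable, let I ⊊ V be a proper subset, and let B ∈ 𝒞_I. Then 0 ≤ ∫_{X⁺} ∏_{ω∈{0,1}^V} (f·1_B)(x^ω) dμ⁺(x⁺) ≤ ∫_{X⁺} ∏_{ω∈{0,1}^V} f(x^ω) dμ⁺(x⁺). -/
open MeasureTheory

/-- The σ-algebra `𝒞_I` on `X = ∏_v X_v` of sets depending only on the coordinates in `I`. -/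
def cylAlg {V : Type} (X : V → Type) [∀ v, MeasurableSpace (X v)] (I : Set V) :
    MeasurableSpace (∀ v, X v) :=
  MeasurableSpace.comap (fun (x : ∀ v, X v) (i : ↥I) => x ↑i) MeasurableSpace.pi

section Aux

variable {V : Type} [Fintype V] [DecidableEq V]
  {X : V → Type} [∀ v, MeasurableSpace (X v)]

/-- Build a point of `∏ v, X v` from a value `t` at `v₀` and values off `v₀` taken from `z`
according to the pattern `σ`. -/
def gQ (v₀ : V) (z : ∀ q : {p : V × Bool // ¬ p.1 = v₀}, X q.1.1) (t : X v₀)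
    (σ : {v : V // ¬ v = v₀} → Bool) : ∀ v, X v :=
  fun v => if h : v = v₀ then h.symm ▸ t else z ⟨(v, σ ⟨v, h⟩), h⟩

/-- The partial Gowers product in the `v₀` coordinate. -/
def gF (v₀ : V) (g : (∀ v, X v) → ℝ)
    (z : ∀ q : {p : V × Bool // ¬ p.1 = v₀}, X q.1.1) (t : X v₀) : ℝ :=
  ∏ σ : {v : V // ¬ v = v₀} → Bool, g (gQ v₀ z t σ)

lemma gQ_measurable (v₀ : V) (z : ∀ q : {p : V × Bool // ¬ p.1 = v₀}, X q.1.1)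
    (σ : {v : V // ¬ v = v₀} → Bool) : Measurable (fun t => gQ v₀ z t σ) := by
  apply measurable_pi_lambda
  intro v
  by_cases h : v = v₀
  · subst h
    simp only [gQ, dif_pos rfl]
    exact measurable_id
  · simp only [gQ, dif_neg h]
    exact measurable_const

lemma gowers_aux (μ : ∀ v, Measure (X v)) [∀ v, IsProbabilityMeasure (μ v)] (v₀ : V)
    (g : (∀ v, X v) → ℝ) (hgm : Measurable g) (C : ℝ) (hC : ∀ x, |g x| ≤ C) (hC0 : 0 ≤ C) :
    Integrable (fun z : ∀ q : {p : V × Bool // ¬ p.1 = v₀}, X q.1.1 =>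
        (∫ t, gF v₀ g z t ∂ μ v₀)^2)
      (Measure.pi fun q : {p : V × Bool // ¬ p.1 = v₀} => μ q.1.1) ∧
    ∫ x : ∀ p : V × Bool, X p.1, ∏ ω : V → Bool, g (fun v => x (v, ω v))
        ∂(Measure.pi fun p : V × Bool => μ p.1)
      = ∫ z, (∫ t, gF v₀ g z t ∂ μ v₀)^2
          ∂(Measure.pi fun q : {p : V × Bool // ¬ p.1 = v₀} => μ q.1.1) := by
  -- notation
  set m : Measure (∀ p : V × Bool, X p.1) := Measure.pi fun p : V × Bool => μ p.1 with hm
  set ν₁ : Measure (∀ q : {p : V × Bool // p.1 = v₀}, X q.1.1) :=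
    Measure.pi fun q : {p : V × Bool // p.1 = v₀} => μ q.1.1 with hν₁
  set ν₂ : Measure (∀ q : {p : V × Bool // ¬ p.1 = v₀}, X q.1.1) :=
    Measure.pi fun q : {p : V × Bool // ¬ p.1 = v₀} => μ q.1.1 with hν₂
  set e₁ : (∀ p : V × Bool, X p.1) ≃ᵐ
      (∀ q : {p : V × Bool // p.1 = v₀}, X q.1.1) × (∀ q : {p : V × Bool // ¬ p.1 = v₀}, X q.1.1) :=
    MeasurableEquiv.piEquivPiSubtypeProd (π := fun p : V × Bool => X p.1)
      (fun p : V × Bool => p.1 = v₀) with he₁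
  have mp₁ : MeasurePreserving e₁ m (ν₁.prod ν₂) :=
    measurePreserving_piEquivPiSubtypeProd (fun p : V × Bool => μ p.1)
      (fun p : V × Bool => p.1 = v₀)
  set G : (∀ p : V × Bool, X p.1) → ℝ :=
    fun x => ∏ ω : V → Bool, g (fun v => x (v, ω v)) with hG
  have hGm : Measurable G := by
    apply Finset.measurable_prod
    intro ω _
    exact hgm.comp (measurable_pi_lambda _ fun v => measurable_pi_apply (v, ω v))
  have hGb : ∀ x, ‖G x‖ ≤ C ^ Fintype.card (V → Bool) := by
    intro x
    rw [Real.norm_eq_abs, hG]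
    calc |∏ ω : V → Bool, g (fun v => x (v, ω v))|
        = ∏ ω : V → Bool, |g (fun v => x (v, ω v))| := Finset.abs_prod _ _
      _ ≤ ∏ _ω : V → Bool, C :=
          Finset.prod_le_prod (fun _ _ => abs_nonneg _) (fun ω _ => hC _)
      _ = C ^ Fintype.card (V → Bool) := by
          rw [Finset.prod_const, Finset.card_univ]
  have hGi : Integrable G m :=
    (integrable_const (C ^ Fintype.card (V → Bool))).mono'
      hGm.aestronglyMeasurable (Filter.Eventually.of_forall hGb)
  have hGi' : Integrable (fun w => G (e₁.symm w)) (ν₁.prod ν₂) := by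
    have := (mp₁.symm e₁).integrable_comp_emb e₁.symm.measurableEmbedding (g := G)
    exact this.mpr hGi
  -- the inner evaluation
  set E : (V → Bool) ≃ Bool × ({v : V // ¬ v = v₀} → Bool) :=
    { toFun := fun ω => (ω v₀, fun u => ω u.1)
      invFun := fun bσ v => if h : v = v₀ then bσ.1 else bσ.2 ⟨v, h⟩
      left_inv := by
        intro ω
        funext v
        dsimp only
        by_cases h : v = v₀
        · rw [dif_pos h, h]
        · rw [dif_neg h]
      right_inv := by
        rintro ⟨b, σ⟩
        refine Prod.ext ?_ ?_
        · simp
        · funext u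
          simp [dif_neg u.2] } with hE
  have hpt : ∀ (y : ∀ q : {p : V × Bool // p.1 = v₀}, X q.1.1)
      (z : ∀ q : {p : V × Bool // ¬ p.1 = v₀}, X q.1.1) (ω : V → Bool),
      (fun v => (e₁.symm (y, z)) (v, ω v))
        = gQ v₀ z (y ⟨(v₀, ω v₀), rfl⟩) (fun u => ω u.1) := by
    intro y z ω
    funext v
    show (Equiv.piEquivPiSubtypeProd (fun p : V × Bool => p.1 = v₀)
        (fun p : V × Bool => X p.1)).symm (y, z) (v, ω v) = _
    rw [Equiv.piEquivPiSubtypeProd_symm_apply]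
    by_cases h : v = v₀
    · subst h
      rw [dif_pos rfl]
      simp [gQ]
    · rw [dif_neg h]
      simp [gQ, dif_neg h]
  have hsplit : ∀ (y : ∀ q : {p : V × Bool // p.1 = v₀}, X q.1.1)
      (z : ∀ q : {p : V × Bool // ¬ p.1 = v₀}, X q.1.1),
      G (e₁.symm (y, z)) = ∏ b : Bool, gF v₀ g z (y ⟨(v₀, b), rfl⟩) := by
    intro y z
    rw [hG]
    calc ∏ ω : V → Bool, g (fun v => (e₁.symm (y, z)) (v, ω v))
        = ∏ ω : V → Bool, g (gQ v₀ z (y ⟨(v₀, ω v₀), rfl⟩) (fun u => ω u.1)) := by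
          refine Finset.prod_congr rfl fun ω _ => ?_
          rw [hpt]
      _ = ∏ bσ : Bool × ({v : V // ¬ v = v₀} → Bool),
            g (gQ v₀ z (y ⟨(v₀, bσ.1), rfl⟩) bσ.2) :=
          Fintype.prod_equiv E _ _ (fun ω => rfl)
      _ = ∏ b : Bool, ∏ σ : {v : V // ¬ v = v₀} → Bool,
            g (gQ v₀ z (y ⟨(v₀, b), rfl⟩) σ) := Fintype.prod_prod_type _
      _ = ∏ b : Bool, gF v₀ g z (y ⟨(v₀, b), rfl⟩) := rfl
  -- the pair equivalence
  set ebE : Fin 2 ≃ {p : V × Bool // p.1 = v₀} :=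
    { toFun := fun i => ⟨(v₀, finTwoEquiv i), rfl⟩
      invFun := fun q => finTwoEquiv.symm q.1.2
      left_inv := by intro i; simp
      right_inv := by
        rintro ⟨⟨v, b⟩, h⟩
        have : v = v₀ := h
        subst this
        simp } with hebE
  set Φ : X v₀ × X v₀ ≃ᵐ (∀ q : {p : V × Bool // p.1 = v₀}, X q.1.1) :=
    (MeasurableEquiv.piFinTwo (fun _ : Fin 2 => X v₀)).symm.trans
      (MeasurableEquiv.piCongrLeft (fun q : {p : V × Bool // p.1 = v₀} => X q.1.1) ebE) with hΦ
  have mpΦ : MeasurePreserving Φ ((μ v₀).prod (μ v₀)) ν₁ := by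
    have mp2 := measurePreserving_piCongrLeft
      (fun q : {p : V × Bool // p.1 = v₀} => μ q.1.1) ebE
    have mp3 := (measurePreserving_piFinTwo (fun _ : Fin 2 => μ v₀)).symm
      (MeasurableEquiv.piFinTwo (fun _ : Fin 2 => X v₀))
    exact mp2.comp mp3
  have hinner : ∀ z, (∫ y, G (e₁.symm (y, z)) ∂ν₁) = (∫ t, gF v₀ g z t ∂ μ v₀)^2 := by
    intro z
    have h1 : (∫ y, G (e₁.symm (y, z)) ∂ν₁)
        = ∫ w : X v₀ × X v₀, G (e₁.symm (Φ w, z)) ∂((μ v₀).prod (μ v₀)) :=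
      (mpΦ.integral_comp Φ.measurableEmbedding (fun y => G (e₁.symm (y, z)))).symm
    rw [h1]
    have h2 : ∀ w : X v₀ × X v₀,
        G (e₁.symm (Φ w, z)) = gF v₀ g z w.1 * gF v₀ g z w.2 := by
      intro w
      rw [hsplit]
      have hev : ∀ i : Fin 2, (Φ w) (ebE i) = (MeasurableEquiv.piFinTwo
          (fun _ : Fin 2 => X v₀)).symm w i := by
        intro i
        show (MeasurableEquiv.piCongrLeft (fun q : {p : V × Bool // p.1 = v₀} => X q.1.1) ebE)
          ((MeasurableEquiv.piFinTwo (fun _ : Fin 2 => X v₀)).symm w) (ebE i) = _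
        rw [MeasurableEquiv.piCongrLeft_apply_apply]
      have hb : ∀ b : Bool, (⟨(v₀, b), rfl⟩ : {p : V × Bool // p.1 = v₀})
          = ebE (finTwoEquiv.symm b) := by
        intro b
        apply Subtype.ext
        simp [hebE]
      calc ∏ b : Bool, gF v₀ g z ((Φ w) ⟨(v₀, b), rfl⟩)
          = ∏ i : Fin 2, gF v₀ g z ((Φ w) ⟨(v₀, finTwoEquiv i), rfl⟩) :=
            (finTwoEquiv.prod_comp fun b => gF v₀ g z ((Φ w) ⟨(v₀, b), rfl⟩)).symm
        _ = ∏ i : Fin 2, gF v₀ g z ((MeasurableEquiv.piFinTwo (fun _ : Fin 2 => X v₀)).symm w i) := by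
            exact Finset.prod_congr rfl fun i _ => congrArg (gF v₀ g z) (hev i)
        _ = gF v₀ g z w.1 * gF v₀ g z w.2 := by
            rw [Fin.prod_univ_two]
            rfl
    calc ∫ w : X v₀ × X v₀, G (e₁.symm (Φ w, z)) ∂((μ v₀).prod (μ v₀))
        = ∫ w : X v₀ × X v₀, gF v₀ g z w.1 * gF v₀ g z w.2 ∂((μ v₀).prod (μ v₀)) := by
          exact integral_congr_ae (Filter.Eventually.of_forall h2)
      _ = (∫ t, gF v₀ g z t ∂ μ v₀) * (∫ t, gF v₀ g z t ∂ μ v₀) :=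
          integral_prod_mul _ _
      _ = (∫ t, gF v₀ g z t ∂ μ v₀)^2 := (sq _).symm
  constructor
  · have hout : Integrable (fun z => ∫ y, G (e₁.symm (y, z)) ∂ν₁) ν₂ :=
      hGi'.integral_prod_right
    exact hout.congr (Filter.Eventually.of_forall fun z => hinner z)
  · calc ∫ x, G x ∂m = ∫ w, G (e₁.symm w) ∂(ν₁.prod ν₂) := by
          rw [← mp₁.integral_comp e₁.measurableEmbedding (fun w => G (e₁.symm w))]
          simp
      _ = ∫ z, ∫ y, G (e₁.symm (y, z)) ∂ν₁ ∂ν₂ := integral_prod_symm _ hGi'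
      _ = ∫ z, (∫ t, gF v₀ g z t ∂ μ v₀)^2 ∂ν₂ :=
          integral_congr_ae (Filter.Eventually.of_forall fun z => hinner z)

end Aux

/-- If `f` is bounded measurable, `I ⊊ V` and `B ∈ 𝒞_I`, then
`0 ≤ ∫ ∏_ω (f·1_B)(x^ω) dμ⁺ ≤ ∫ ∏_ω f(x^ω) dμ⁺`. -/
theorem gowers_wf (V : Type) [Fintype V] [DecidableEq V] [Nonempty V]
    (X : V → Type) [∀ v, MeasurableSpace (X v)]
    (μ : ∀ v, Measure (X v)) [∀ v, IsProbabilityMeasure (μ v)]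
    (f : (∀ v, X v) → ℝ) (hfb : ∃ C, ∀ x, |f x| ≤ C) (hfm : Measurable f)
    (I : Set V) (hI : I ≠ Set.univ)
    (B : Set (∀ v, X v)) (hB : MeasurableSet[cylAlg X I] B) :
    (0 ≤ ∫ x : ∀ p : V × Bool, X p.1,
        ∏ ω : V → Bool, (B.indicator f) (fun v => x (v, ω v))
        ∂(Measure.pi fun p : V × Bool => μ p.1)) ∧
    (∫ x : ∀ p : V × Bool, X p.1,
        ∏ ω : V → Bool, (B.indicator f) (fun v => x (v, ω v))
        ∂(Measure.pi fun p : V × Bool => μ p.1))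
      ≤ ∫ x : ∀ p : V × Bool, X p.1,
        ∏ ω : V → Bool, f (fun v => x (v, ω v))
        ∂(Measure.pi fun p : V × Bool => μ p.1) := by
  obtain ⟨v₀, hv₀⟩ : ∃ v, v ∉ I := by
    by_contra h
    push_neg at h
    exact hI (Set.eq_univ_of_forall h)
  obtain ⟨C, hC⟩ := hfb
  -- the coordinates are nonempty
  have hXne : ∀ v, Nonempty (X v) := by
    intro v
    by_contra h
    rw [not_nonempty_iff] at h
    have h1 : (μ v) Set.univ = 1 := measure_univ
    rw [Set.univ_eq_empty_iff.mpr h, measure_empty] at h1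
    exact zero_ne_one h1
  set C₁ : ℝ := max C 0 with hC₁
  have hC₁0 : 0 ≤ C₁ := le_max_right _ _
  have hfC₁ : ∀ x, |f x| ≤ C₁ := fun x => (hC x).trans (le_max_left _ _)
  have hindC₁ : ∀ x, |B.indicator f x| ≤ C₁ := by
    intro x
    by_cases h : x ∈ B
    · rw [Set.indicator_of_mem h]; exact hfC₁ x
    · rw [Set.indicator_of_notMem h]; simpa using hC₁0
  -- B is a measurable cylinder set
  obtain ⟨S, hSm, hSB⟩ :
      ∃ S, MeasurableSet S ∧ (fun (x : ∀ v, X v) (i : ↥I) => x ↑i) ⁻¹' S = B := hB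
  have hr : Measurable (fun (x : ∀ v, X v) (i : ↥I) => x ↑i) :=
    measurable_pi_lambda _ fun i => measurable_pi_apply _
  have hBmeas : MeasurableSet B := hSB ▸ hr hSm
  have h1 := gowers_aux μ v₀ f hfm C₁ hfC₁ hC₁0
  have h2 := gowers_aux μ v₀ (B.indicator f) (hfm.indicator hBmeas) C₁ hindC₁ hC₁0
  -- the indicator factor
  obtain ⟨t₀⟩ := hXne v₀
  set c : (∀ q : {p : V × Bool // ¬ p.1 = v₀}, X q.1.1) → ℝ :=
    fun z => ∏ σ : {v : V // ¬ v = v₀} → Bool,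
      B.indicator (fun _ => (1 : ℝ)) (gQ v₀ z t₀ σ) with hc
  have hmemB : ∀ z t t' σ, gQ v₀ z t σ ∈ B ↔ gQ v₀ z t' σ ∈ B := by
    intro z t t' σ
    rw [← hSB, Set.mem_preimage, Set.mem_preimage]
    have : (fun i : ↥I => gQ v₀ z t σ i) = (fun i : ↥I => gQ v₀ z t' σ i) := by
      funext i
      have hne : ¬ (i : V) = v₀ := fun h => hv₀ (h ▸ i.2)
      simp [gQ, dif_neg hne]
    rw [this]
  have hkey : ∀ z t, gF v₀ (B.indicator f) z t = c z * gF v₀ f z t := by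
    intro z t
    rw [hc, gF, gF, ← Finset.prod_mul_distrib]
    refine Finset.prod_congr rfl fun σ _ => ?_
    by_cases h : gQ v₀ z t σ ∈ B
    · have h0 : gQ v₀ z t₀ σ ∈ B := (hmemB z t t₀ σ).mp h
      rw [Set.indicator_of_mem h, Set.indicator_of_mem h0, one_mul]
    · have h0 : gQ v₀ z t₀ σ ∉ B := fun hh => h ((hmemB z t₀ t σ).mp hh)
      rw [Set.indicator_of_notMem h, Set.indicator_of_notMem h0, zero_mul]
  have hc0 : ∀ z, 0 ≤ c z := by
    intro z
    refine Finset.prod_nonneg fun σ _ => ?_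
    exact Set.indicator_nonneg (fun _ _ => zero_le_one) _
  have hc1 : ∀ z, c z ≤ 1 := by
    intro z
    refine Finset.prod_le_one (fun σ _ => Set.indicator_nonneg (fun _ _ => zero_le_one) _)
      (fun σ _ => ?_)
    by_cases h : gQ v₀ z t₀ σ ∈ B
    · rw [Set.indicator_of_mem h]
    · rw [Set.indicator_of_notMem h]; exact zero_le_one
  have hψ : ∀ z, (∫ t, gF v₀ (B.indicator f) z t ∂ μ v₀)
      = c z * ∫ t, gF v₀ f z t ∂ μ v₀ := by
    intro z
    calc ∫ t, gF v₀ (B.indicator f) z t ∂ μ v₀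
        = ∫ t, c z * gF v₀ f z t ∂ μ v₀ :=
          integral_congr_ae (Filter.Eventually.of_forall fun t => hkey z t)
      _ = c z * ∫ t, gF v₀ f z t ∂ μ v₀ := integral_const_mul _ _
  constructor
  · rw [h2.2]
    exact integral_nonneg fun z => sq_nonneg _
  · rw [h2.2, h1.2]
    refine integral_mono h2.1 h1.1 fun z => ?_
    rw [hψ z, mul_pow]
    have hcz : c z ^ 2 ≤ 1 := by nlinarith [hc0 z, hc1 z]
    nlinarith [sq_nonneg (∫ t, gF v₀ f z t ∂ μ v₀), hcz, hc0 z]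
end

section
/- (Gowers–Cauchy–Schwarz) For each ω ∈ {0,1}^V let f_ω : X → ℝ be bounded and measurable. Then |∫_{X⁺} ∏_{ω∈{0,1}^V} f_ω(x^ω) dμ⁺(x⁺)| ≤ ∏_{ω∈{0,1}^V} ‖f_ω‖_{□^V}. -/
/-!
Fix `v ∈ V` and integrate out the two coordinates `x(v,0)`, `x(v,1)` first. The factors of
`∏_ω F_ω(x^ω)` with `ω(v) = 0` involve `x(v,·)` only through `x(v,0)`, those with `ω(v) = 1` only
through `x(v,1)`; so the box inner product of the family `F` becomes `∫ g₀ g₁` over the remaining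
coordinates, and Cauchy–Schwarz bounds its square by `∫ g₀² · ∫ g₁²`. These two factors are again
box inner products, of the families obtained from `F` by forcing `ω(v) = 0`, resp. `ω(v) = 1`.
Doing this once for each `v ∈ V` leaves only constant families `ω ↦ F_τ`, and gives
`|⟨F⟩|^{2^|V|} ≤ ∏_τ ‖F_τ‖^{2^|V|}`. Box integrals of single functions are nonnegative since for
them `g₀ = g₁`.
-/

open MeasureTheory

/-- The Gowers box integral `∫_{X⁺} ∏_{ω ∈ {0,1}^V} f(x^ω) dμ⁺`. -/
noncomputable def boxInt {V : Type} [Fintype V] [DecidableEq V]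
    (X : V → Type) [∀ v, MeasurableSpace (X v)] (μ : ∀ v, Measure (X v))
    (f : (∀ v, X v) → ℝ) : ℝ :=
  ∫ x : ∀ p : V × Bool, X p.1,
    ∏ ω : V → Bool, f (fun v => x (v, ω v))
    ∂(Measure.pi fun p : V × Bool => μ p.1)

/-- The Gowers box seminorm `‖f‖_{□^V} = (boxInt f)^{1/2^{|V|}}`. -/
noncomputable def boxNorm {V : Type} [Fintype V] [DecidableEq V]
    (X : V → Type) [∀ v, MeasurableSpace (X v)] (μ : ∀ v, Measure (X v))
    (f : (∀ v, X v) → ℝ) : ℝ :=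
  (boxInt X μ f) ^ ((1 : ℝ) / 2 ^ Fintype.card V)

open Function

theorem sq_integral_mul_le {α : Type*} [MeasurableSpace α] {μ : Measure α} {g h : α → ℝ}
    (hg : MemLp g 2 μ) (hh : MemLp h 2 μ) :
    (∫ a, g a * h a ∂μ) ^ 2 ≤ (∫ a, g a ^ 2 ∂μ) * ∫ a, h a ^ 2 ∂μ := by
  have inner_toLp {f f' : α → ℝ} (hf : MemLp f 2 μ) (hf' : MemLp f' 2 μ) :
      inner ℝ (hf.toLp f) (hf'.toLp f') = ∫ a, f a * f' a ∂μ := by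
    rw [L2.inner_def]
    refine integral_congr_ae ?_
    filter_upwards [hf.coeFn_toLp, hf'.coeFn_toLp] with a h₁ h₂
    simp [h₁, h₂, mul_comm]
  simpa only [sq, inner_toLp] using real_inner_mul_inner_self_le (hg.toLp g) (hh.toLp h)

theorem memLp_integral_prod_right_of_abs_le {α β : Type*} [MeasurableSpace α]
    [MeasurableSpace β] {μ : Measure α} {ν : Measure β} [IsFiniteMeasure μ] [IsFiniteMeasure ν]
    {f : α × β → ℝ} (hf : Measurable f) {C : ℝ} (hC : ∀ z, |f z| ≤ C) (p : ENNReal) :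
    MemLp (fun x => ∫ y, f (x, y) ∂ν) p μ := by
  refine .of_bound hf.stronglyMeasurable.integral_prod_right'.aestronglyMeasurable
    (C * ν.real Set.univ) (.of_forall fun x => ?_)
  simpa using norm_integral_le_of_norm_le_const (μ := ν) (f := fun y => f (x, y)) (C := C)
    (.of_forall fun y => hC (x, y))

theorem exists_abs_prod_le_s8 {ι α : Type*} [Fintype ι] {g : ι → α → ℝ}
    (hg : ∀ i, ∃ C, ∀ x, |g i x| ≤ C) : ∃ C, ∀ x, |∏ i, g i x| ≤ C := by
  choose C hC using hg
  exact ⟨∏ i, C i, fun x => (Finset.abs_prod _ _).trans_le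
    (Finset.prod_le_prod (fun i _ => abs_nonneg _) fun i _ => hC i x)⟩

theorem le_prod_rpow_of_pow_le_prod {ι : Type*} (s : Finset ι) {a : ℝ} {b : ι → ℝ} {n : ℕ}
    (ha : 0 ≤ a) (hb : ∀ i ∈ s, 0 ≤ b i) (hn : n ≠ 0) (h : a ^ n ≤ ∏ i ∈ s, b i) :
    a ≤ ∏ i ∈ s, b i ^ (n⁻¹ : ℝ) := by
  rw [Real.finsetProd_rpow s b hb, ← Real.pow_rpow_inv_natCast ha hn]
  exact Real.rpow_le_rpow (pow_nonneg ha n) h (by positivity)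

theorem Finset.piecewise_update_eq_insert_piecewise {ι : Type*} [DecidableEq ι] {β : ι → Type*}
    {S : Finset ι} {v : ι} (hv : v ∉ S) (τ ω : ∀ i, β i) (b : β v) :
    S.piecewise τ (update ω v b) = (insert v S).piecewise (update τ v b) ω := by
  rw [piecewise_insert, update_self, ← update_piecewise_of_notMem _ _ _ hv]
  congr 1
  exact S.piecewise_congr (fun i hi => (update_of_ne (ne_of_mem_of_not_mem hi hv) _ _).symm)
    fun _ _ => rfl

section SplitAt

variable {V : Type*} [DecidableEq V]

theorem funSplitAt_symm_apply_self {β : Type*} (v : V) (b : β) (σ : {u // u ≠ v} → β) :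
    (Equiv.funSplitAt v β).symm (b, σ) v = b := by
  simp

theorem funSplitAt_symm_apply_val {β : Type*} (v : V) (b : β) (σ : {u // u ≠ v} → β)
    (u : {u // u ≠ v}) : (Equiv.funSplitAt v β).symm (b, σ) u = σ u := by
  simp [u.2]

theorem update_funSplitAt_symm {β : Type*} (v : V) (b c : β) (σ : {u // u ≠ v} → β) :
    update ((Equiv.funSplitAt v β).symm (b, σ)) v c = (Equiv.funSplitAt v β).symm (c, σ) := by
  funext u
  by_cases h : u = v
  · subst h; simp
  · simp [h]

theorem measurable_piSplitAt_symm {X : V → Type*} [∀ v, MeasurableSpace (X v)] (v : V) :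
    Measurable (Equiv.piSplitAt v X).symm := by
  refine measurable_pi_lambda _ fun u => ?_
  simp only [Equiv.piSplitAt_symm_apply]
  by_cases h : u = v
  · subst h
    simpa using measurable_fst
  · simp only [dif_neg h]
    exact (measurable_pi_apply (⟨u, h⟩ : {j // j ≠ v})).comp measurable_snd

variable [Fintype V]

theorem prod_eq_prod_prod_funSplitAt {β M : Type*} [Fintype β] [CommMonoid M] (v : V)
    (g : (V → β) → M) : ∏ ω, g ω = ∏ b, ∏ σ, g ((Equiv.funSplitAt v β).symm (b, σ)) := by
  rw [← (Equiv.funSplitAt v β).symm.prod_comp, Fintype.prod_prod_type]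

theorem prod_update_false_mul_update_true {M : Type*} [CommMonoid M] (v : V)
    (g : (V → Bool) → M) : ∏ τ, g (update τ v false) * g (update τ v true) = (∏ τ, g τ) ^ 2 := by
  have h c : ∏ τ, g (update τ v c) = (∏ σ, g ((Equiv.funSplitAt v Bool).symm (c, σ))) ^ 2 := by
    simp [prod_eq_prod_prod_funSplitAt v (fun τ => g (update τ v c)), update_funSplitAt_symm, sq]
  rw [Finset.prod_mul_distrib, h, h, prod_eq_prod_prod_funSplitAt v, Fintype.prod_bool, mul_pow,
    mul_comm]

end SplitAt

section Slice

variable {V : Type} [DecidableEq V] (X : V → Type)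

abbrev CubeAway (v : V) := ∀ q : {q : V × Bool // q.1 ≠ v}, X q.1.1

def boolEquivFiber (v : V) : Bool ≃ {q : V × Bool // q.1 = v} where
  toFun b := ⟨(v, b), rfl⟩
  invFun q := q.1.2
  left_inv _ := rfl
  right_inv := by rintro ⟨⟨u, b⟩, rfl⟩; rfl

variable {X} [Fintype V]

/-- `∏_{ω(v) = b} F_ω(x^ω)` as a function of `t = x(v,b)` and of the coordinates `y` away
from `v`. -/
def sliceProd (v : V) (F : (V → Bool) → (∀ v, X v) → ℝ) (b : Bool) (t : X v)
    (y : CubeAway X v) : ℝ :=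
  ∏ σ, F ((Equiv.funSplitAt v Bool).symm (b, σ))
    ((Equiv.piSplitAt v X).symm (t, fun u => y ⟨(u.1, σ u), u.2⟩))

theorem sliceProd_comp_update (v : V) (F : (V → Bool) → (∀ v, X v) → ℝ) (c b : Bool) :
    sliceProd v (fun ω => F (update ω v c)) b = sliceProd v F c := by
  funext t y
  simp only [sliceProd, update_funSplitAt_symm]

end Slice

section CubeSplit

variable {V : Type} [DecidableEq V] (X : V → Type) [∀ v, MeasurableSpace (X v)]

def cubeSplit (v : V) : (Bool → X v) × CubeAway X v ≃ᵐ ∀ p : V × Bool, X p.1 :=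
  ((MeasurableEquiv.piCongrLeft (fun q : {q : V × Bool // q.1 = v} => X q.1.1)
    (boolEquivFiber v)).prodCongr (.refl _)).trans
    (MeasurableEquiv.piEquivPiSubtypeProd (fun p : V × Bool => X p.1) (·.1 = v)).symm

variable {X}

theorem cubeSplit_apply_vertex (v : V) (w : Bool → X v) (y : CubeAway X v) (ω : V → Bool) :
    (fun u => cubeSplit X v (w, y) (u, ω u))
      = (Equiv.piSplitAt v X).symm (w (ω v), fun u => y ⟨(u.1, ω u.1), u.2⟩) := by
  funext u
  change (Equiv.piEquivPiSubtypeProd (·.1 = v) fun p : V × Bool => X p.1).symm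
    (MeasurableEquiv.piCongrLeft _ (boolEquivFiber v) w, y) (u, ω u) = _
  rw [Equiv.piEquivPiSubtypeProd_symm_apply, Equiv.piSplitAt_symm_apply]
  by_cases h : u = v
  · subst h
    rw [dif_pos rfl, dif_pos rfl]
    exact MeasurableEquiv.piCongrLeft_apply_apply
      (β := fun q : {q : V × Bool // q.1 = u} => X q.1.1) (boolEquivFiber u) w (ω u)
  · simp only [dif_neg h]

variable [Fintype V]

theorem prod_vertex_cubeSplit (v : V) (F : (V → Bool) → (∀ v, X v) → ℝ) (w : Bool → X v)
    (y : CubeAway X v) :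
    ∏ ω, F ω (fun u => cubeSplit X v (w, y) (u, ω u)) = ∏ b, sliceProd v F b (w b) y := by
  rw [prod_eq_prod_prod_funSplitAt v]
  refine Fintype.prod_congr _ _ fun b => Fintype.prod_congr _ _ fun σ => ?_
  simp only [cubeSplit_apply_vertex, funSplitAt_symm_apply_self]
  congr! with u
  exact funSplitAt_symm_apply_val v b σ u

variable (μ : ∀ v, Measure (X v)) [∀ v, IsFiniteMeasure (μ v)]

noncomputable abbrev cubeAwayMeasure (v : V) : Measure (CubeAway X v) :=
  Measure.pi fun q : {q : V × Bool // q.1 ≠ v} => μ q.1.1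

theorem measurePreserving_cubeSplit (v : V) :
    MeasurePreserving (cubeSplit X v) ((Measure.pi fun _ => μ v).prod (cubeAwayMeasure μ v))
      (Measure.pi fun p : V × Bool => μ p.1) :=
  (measurePreserving_piEquivPiSubtypeProd (fun p : V × Bool => μ p.1) (·.1 = v)).symm.comp
    ((measurePreserving_piCongrLeft (fun q : {q : V × Bool // q.1 = v} => μ q.1.1)
      (boolEquivFiber v)).prod (.id _))

end CubeSplit

section BoxInner

variable {V : Type} [Fintype V] [DecidableEq V] {X : V → Type} [∀ v, MeasurableSpace (X v)]
  (μ : ∀ v, Measure (X v))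

noncomputable def boxInner (F : (V → Bool) → (∀ v, X v) → ℝ) : ℝ :=
  ∫ x : ∀ p : V × Bool, X p.1, ∏ ω : V → Bool, F ω (fun v => x (v, ω v))
    ∂(Measure.pi fun p : V × Bool => μ p.1)

theorem boxInt_eq_boxInner (f : (∀ v, X v) → ℝ) : boxInt X μ f = boxInner μ (fun _ => f) := rfl

noncomputable def sliceIntegral (v : V) (F : (V → Bool) → (∀ v, X v) → ℝ) (b : Bool)
    (y : CubeAway X v) : ℝ :=
  ∫ t, sliceProd v F b t y ∂μ v

variable {μ} [∀ v, IsFiniteMeasure (μ v)] {F : (V → Bool) → (∀ v, X v) → ℝ}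

theorem boxInner_eq_integral_prod_sliceIntegral (hF : ∀ ω, ∃ C, ∀ x, |F ω x| ≤ C)
    (hFm : ∀ ω, Measurable (F ω)) (v : V) :
    boxInner μ F = ∫ y, ∏ b, sliceIntegral μ v F b y ∂cubeAwayMeasure μ v := by
  obtain ⟨C, hC⟩ := exists_abs_prod_le_s8 (g := fun ω (x : ∀ p : V × Bool, X p.1) =>
    F ω (fun u => x (u, ω u))) fun ω => (hF ω).imp fun C hC x => hC _
  have hint : Integrable (fun z => ∏ ω, F ω (fun u => cubeSplit X v z (u, ω u)))
      ((Measure.pi fun _ => μ v).prod (cubeAwayMeasure μ v)) :=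
    .of_bound (Measurable.aestronglyMeasurable
      (by have := (cubeSplit X v).measurable; fun_prop)) C (.of_forall fun z => hC _)
  rw [boxInner, ← (measurePreserving_cubeSplit μ v).integral_comp', integral_prod_symm _ hint]
  simp only [prod_vertex_cubeSplit, sliceIntegral]
  exact integral_congr_ae (.of_forall fun y =>
    integral_fintype_prod_eq_prod (fun b t => sliceProd v F b t y))

theorem memLp_sliceIntegral (hF : ∀ ω, ∃ C, ∀ x, |F ω x| ≤ C) (hFm : ∀ ω, Measurable (F ω))
    (v : V) (b : Bool) : MemLp (sliceIntegral μ v F b) 2 (cubeAwayMeasure μ v) := by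
  obtain ⟨C, hC⟩ := exists_abs_prod_le_s8 (g := fun σ (z : CubeAway X v × X v) =>
    F ((Equiv.funSplitAt v Bool).symm (b, σ))
      ((Equiv.piSplitAt v X).symm (z.2, fun u => z.1 ⟨(u.1, σ u), u.2⟩)))
    fun σ => (hF _).imp fun C hC z => hC _
  have := measurable_piSplitAt_symm (X := X) v
  exact memLp_integral_prod_right_of_abs_le (f := fun z => sliceProd v F b z.2 z.1)
    (by unfold sliceProd; fun_prop) hC 2

theorem boxInner_comp_update (hF : ∀ ω, ∃ C, ∀ x, |F ω x| ≤ C) (hFm : ∀ ω, Measurable (F ω))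
    (v : V) (c : Bool) :
    boxInner μ (fun ω => F (update ω v c))
      = ∫ y, sliceIntegral μ v F c y ^ 2 ∂cubeAwayMeasure μ v := by
  rw [boxInner_eq_integral_prod_sliceIntegral (fun ω => hF _) (fun ω => hFm _) v]
  simp only [sliceIntegral, sliceProd_comp_update, Fintype.prod_bool, sq]

theorem sq_boxInner_le (hF : ∀ ω, ∃ C, ∀ x, |F ω x| ≤ C) (hFm : ∀ ω, Measurable (F ω)) (v : V) :
    boxInner μ F ^ 2
      ≤ boxInner μ (fun ω => F (update ω v false)) * boxInner μ (fun ω => F (update ω v true)) := by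
  rw [boxInner_eq_integral_prod_sliceIntegral hF hFm v, boxInner_comp_update hF hFm,
    boxInner_comp_update hF hFm, mul_comm]
  simp only [Fintype.prod_bool]
  exact sq_integral_mul_le (memLp_sliceIntegral hF hFm v true) (memLp_sliceIntegral hF hFm v false)

theorem boxInner_const_nonneg [Nonempty V] {f : (∀ v, X v) → ℝ} (hf : ∃ C, ∀ x, |f x| ≤ C)
    (hfm : Measurable f) : 0 ≤ boxInner μ (fun _ => f) := by
  obtain ⟨v⟩ := ‹Nonempty V›
  exact (integral_nonneg fun _ => sq_nonneg _).trans_eq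
    (boxInner_comp_update (F := fun _ => f) (fun _ => hf) (fun _ => hfm) v false).symm

theorem pow_abs_boxInner_le_prod_piecewise (hF : ∀ ω, ∃ C, ∀ x, |F ω x| ≤ C)
    (hFm : ∀ ω, Measurable (F ω)) (S : Finset V) :
    |boxInner μ F| ^ 2 ^ Fintype.card V
      ≤ ∏ τ : V → Bool, |boxInner μ (fun ω => F (S.piecewise τ ω))| := by
  induction S using Finset.induction_on with
  | empty => simp
  | insert v S hv ih =>
    refine ih.trans ?_
    set c := fun τ => |boxInner μ (fun ω => F ((insert v S).piecewise τ ω))|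
    have hstep τ : |boxInner μ (fun ω => F (S.piecewise τ ω))| ^ 2
        ≤ c (update τ v false) * c (update τ v true) := by
      have h := sq_boxInner_le (μ := μ) (F := fun ω => F (S.piecewise τ ω)) (fun _ => hF _)
        (fun _ => hFm _) v
      simp only [Finset.piecewise_update_eq_insert_piecewise hv] at h
      rw [sq_abs, ← abs_mul]
      exact h.trans (le_abs_self _)
    rw [← pow_le_pow_iff_left₀ (Finset.prod_nonneg fun _ _ => abs_nonneg _)
      (Finset.prod_nonneg fun _ _ => abs_nonneg _) two_ne_zero, ← Finset.prod_pow,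
      ← prod_update_false_mul_update_true v c]
    exact Finset.prod_le_prod (fun _ _ => sq_nonneg _) fun τ _ => hstep τ

end BoxInner

/-- **Gowers–Cauchy–Schwarz.** -/
theorem gowers_cauchy_schwarz (V : Type) [Fintype V] [DecidableEq V] [Nonempty V]
    (X : V → Type) [∀ v, MeasurableSpace (X v)]
    (μ : ∀ v, Measure (X v)) [∀ v, IsProbabilityMeasure (μ v)]
    (f : (V → Bool) → (∀ v, X v) → ℝ)
    (hfb : ∀ ω, ∃ C, ∀ x, |f ω x| ≤ C) (hfm : ∀ ω, Measurable (f ω)) :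
    |∫ x : ∀ p : V × Bool, X p.1,
        ∏ ω : V → Bool, f ω (fun v => x (v, ω v))
        ∂(Measure.pi fun p : V × Bool => μ p.1)|
      ≤ ∏ ω : V → Bool, boxNorm X μ (f ω) := by
  have hnonneg (τ : V → Bool) : 0 ≤ boxInner μ (fun _ => f τ) :=
    boxInner_const_nonneg (hfb τ) (hfm τ)
  have key := pow_abs_boxInner_le_prod_piecewise (μ := μ) hfb hfm Finset.univ
  simp only [Finset.piecewise_univ, abs_of_nonneg (hnonneg _)] at key
  refine (le_prod_rpow_of_pow_le_prod _ (abs_nonneg _) (fun τ _ => hnonneg τ)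
    (pow_ne_zero _ two_ne_zero) key).trans_eq (Finset.prod_congr rfl fun τ _ => ?_)
  rw [boxNorm, boxInt_eq_boxInner, one_div]
  push_cast
  rfl
end

section
/- For every bounded measurable f : X → ℝ, |∫_X f dμ| ≤ ‖f‖_{□^V}. -/
open MeasureTheory

/-!
Iterated Cauchy–Schwarz. For `s ⊆ V` let `I_s` be the integral over `X⁺` of the product of the
`f(x^ω)` over the vertices `ω` supported in `s`, so that `I_∅ = ∫ f dμ` and `I_V` is the box
integral. For `v ∉ s` the integrand `G` of `I_s` does not depend on the coordinate `(v, 1)`, and the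
integrand of `I_{s ∪ {v}}` is `G` times the copy of `G` with `x(v, 0)` replaced by `x(v, 1)`.
Averaging first over `(v, 1)` and then over `(v, 0)` turns `I_{s ∪ {v}}` into `∫ A²`, where `A` is
the average of `G` over `(v, 0)`, while `I_s = ∫ A`; hence `I_s² ≤ I_{s ∪ {v}}`. Adding the elements
of `V` one at a time gives `|∫ f dμ|^(2^|V|) ≤ I_V`.
-/

open Function

theorem MeasureTheory.MeasurePreserving.integral_comp_of_aestronglyMeasurable {α β E : Type*}
    [MeasurableSpace α] [MeasurableSpace β] [NormedAddCommGroup E] [NormedSpace ℝ E]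
    {μ : Measure α} {ν : Measure β} {T : α → β} (hT : MeasurePreserving T μ ν) {g : β → E}
    (hg : AEStronglyMeasurable g ν) :
    ∫ x, g (T x) ∂μ = ∫ y, g y ∂ν := by
  rw [← integral_map hT.measurable.aemeasurable (hT.map_eq.symm ▸ hg), hT.map_eq]

theorem sq_integral_le_integral_sq {Ω : Type*} [MeasurableSpace Ω] {μ : Measure Ω}
    [IsProbabilityMeasure μ] {f : Ω → ℝ} (hf : MemLp f 2 μ) :
    (∫ x, f x ∂μ) ^ 2 ≤ ∫ x, f x ^ 2 ∂μ := by
  have h := ProbabilityTheory.variance_nonneg f μ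
  rw [ProbabilityTheory.variance_eq_sub hf] at h
  simpa using h

section CoordAvg

variable {ι : Type*} {α : ι → Type*} [∀ i, MeasurableSpace (α i)] (m : ∀ i, Measure (α i))

theorem measurePreserving_slice [Fintype ι] [∀ i, IsProbabilityMeasure (m i)] {β : Type*}
    [Fintype β] (b : β) :
    MeasurePreserving (fun (x : ∀ p : ι × β, α p.1) i => x (i, b))
      (Measure.pi fun p => m p.1) (Measure.pi m) := by
  classical
  have hmeas : Measurable (fun (x : ∀ p : ι × β, α p.1) i => x (i, b)) :=
    measurable_pi_lambda _ fun i => measurable_pi_apply _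
  refine ⟨hmeas, (Measure.pi_eq fun s hs => ?_).symm⟩
  have hpre : (fun (x : ∀ p : ι × β, α p.1) i => x (i, b)) ⁻¹' Set.univ.pi s
      = Set.univ.pi fun p : ι × β => if p.2 = b then s p.1 else Set.univ := by
    ext x
    simp only [Set.mem_preimage, Set.mem_univ_pi]
    constructor
    · rintro h ⟨i, c⟩
      split_ifs with hc
      · subst hc; exact h i
      · trivial
    · intro h i
      simpa using h (i, b)
  rw [Measure.map_apply hmeas (MeasurableSet.univ_pi hs), hpre, Measure.pi_pi,
    Fintype.prod_prod_type]
  refine Finset.prod_congr rfl fun i _ => ?_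
  simp [apply_ite]

variable [DecidableEq ι]

theorem measurePreserving_update [Fintype ι] [∀ i, SigmaFinite (m i)] (i : ι)
    [IsProbabilityMeasure (m i)] :
    MeasurePreserving (fun y : (∀ j, α j) × α i => update y.1 i y.2)
      ((Measure.pi m).prod (m i)) (Measure.pi m) := by
  refine ⟨measurable_update', (Measure.pi_eq fun s hs => ?_).symm⟩
  have hpre : (fun y : (∀ j, α j) × α i => update y.1 i y.2) ⁻¹' Set.univ.pi s
      = Set.univ.pi (update s i Set.univ) ×ˢ s i := by
    ext ⟨x, a⟩
    simp only [Set.mem_preimage, Set.mem_univ_pi, Set.mem_prod]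
    constructor
    · intro h
      refine ⟨fun j => ?_, by simpa using h i⟩
      by_cases hj : j = i
      · subst hj; simp
      · simpa [hj] using h j
    · rintro ⟨h, ha⟩ j
      by_cases hj : j = i
      · subst hj; simpa using ha
      · simpa [hj] using h j
  rw [Measure.map_apply measurable_update' (MeasurableSet.univ_pi hs), hpre,
    Measure.prod_prod, Measure.pi_pi,
    Fintype.prod_eq_mul_prod_compl i, Fintype.prod_eq_mul_prod_compl i]
  simp only [update_self, measure_univ, one_mul]
  rw [mul_comm]
  congr 1
  refine Finset.prod_congr rfl fun j hj => ?_
  rw [update_of_ne (by simpa using hj)]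

noncomputable def coordAvg (i : ι) (F : (∀ j, α j) → ℝ) (x : ∀ j, α j) : ℝ :=
  ∫ a, F (update x i a) ∂m i

variable {m}

theorem integral_coordAvg [Fintype ι] [∀ j, SigmaFinite (m j)] (i : ι)
    [IsProbabilityMeasure (m i)] {F : (∀ j, α j) → ℝ} (hF : Integrable F (Measure.pi m)) :
    ∫ x, coordAvg m i F x ∂Measure.pi m = ∫ x, F x ∂Measure.pi m := by
  have h := measurePreserving_update m i
  rw [← h.integral_comp_of_aestronglyMeasurable hF.aestronglyMeasurable]
  exact (integral_prod _ ((h.integrable_comp hF.aestronglyMeasurable).mpr hF)).symm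

theorem coordAvg_update (i : ι) (F : (∀ j, α j) → ℝ) (x : ∀ j, α j) (a : α i) :
    coordAvg m i F (update x i a) = coordAvg m i F x := by
  simp only [coordAvg, update_idem]

theorem coordAvg_mul_left {i : ι} {H : (∀ j, α j) → ℝ} (hH : ∀ x a, H (update x i a) = H x)
    (F : (∀ j, α j) → ℝ) (x : ∀ j, α j) :
    coordAvg m i (fun y => H y * F y) x = H x * coordAvg m i F x := by
  simp only [coordAvg, hH, integral_const_mul]

theorem measurable_coordAvg (i : ι) [SFinite (m i)] {F : (∀ j, α j) → ℝ}
    (hF : Measurable F) : Measurable (coordAvg m i F) :=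
  (hF.comp measurable_update').stronglyMeasurable.integral_prod_right'.measurable

theorem abs_coordAvg_le (i : ι) [IsProbabilityMeasure (m i)] {F : (∀ j, α j) → ℝ} {C : ℝ}
    (hC : ∀ x, |F x| ≤ C) (x : ∀ j, α j) : |coordAvg m i F x| ≤ C := by
  simpa [coordAvg] using norm_integral_le_of_norm_le_const (μ := m i)
    (ae_of_all _ fun a => (Real.norm_eq_abs _).trans_le (hC (update x i a)))

end CoordAvg

theorem sq_integral_le_integral_mul_update {ι : Type*} [Fintype ι] [DecidableEq ι]
    {α : ι → Type*} [∀ i, MeasurableSpace (α i)] {m : ∀ i, Measure (α i)}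
    [∀ i, IsProbabilityMeasure (m i)] {G : (∀ p : ι × Bool, α p.1) → ℝ} (hG : Measurable G)
    {C : ℝ} (hC : ∀ x, |G x| ≤ C) (v : ι) (hGv : ∀ x b, G (update x (v, true) b) = G x) :
    (∫ x, G x ∂Measure.pi fun p => m p.1) ^ 2
      ≤ ∫ x, G x * G (update x (v, false) (x (v, true))) ∂Measure.pi fun p => m p.1 := by
  set P := Measure.pi fun p : ι × Bool => m p.1
  set A := coordAvg (fun p : ι × Bool => m p.1) (v, false) G
  have hA : Measurable A := measurable_coordAvg _ hG
  have hAC : ∀ x, |A x| ≤ C := abs_coordAvg_le _ hC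
  have hAv : ∀ x a, A (update x (v, false) a) = A x := coordAvg_update _ G
  have hCC : ∀ a b : ℝ, |a| ≤ C → |b| ≤ C → |a * b| ≤ C * C := fun a b ha hb =>
    (abs_mul a b).trans_le (mul_le_mul ha hb (abs_nonneg b) ((abs_nonneg a).trans ha))
  have hGA : ∫ x, G x ∂P = ∫ x, A x ∂P :=
    (integral_coordAvg _ (.of_bound hG.aestronglyMeasurable C (ae_of_all _ hC))).symm
  have h_copy : ∫ x, G x * G (update x (v, false) (x (v, true))) ∂P = ∫ x, G x * A x ∂P := by
    rw [← integral_coordAvg (v, true)]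
    · congr 1 with x
      simp only [coordAvg, update_self, update_comm (show (v, true) ≠ (v, false) by simp), hGv]
      exact integral_const_mul _ _
    · have hcopy : Measurable fun x : ∀ p : ι × Bool, α p.1 => update x (v, false) (x (v, true)) :=
        (measurable_update' (a := (v, false))).comp
          (measurable_id.prodMk (measurable_pi_apply (v, true)))
      exact .of_bound (hG.mul (hG.comp hcopy)).aestronglyMeasurable (C * C)
        (ae_of_all _ fun x => hCC _ _ (hC _) (hC _))
  have h_avg : ∫ x, G x * A x ∂P = ∫ x, A x ^ 2 ∂P := by
    simp_rw [mul_comm (G _)]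
    rw [← integral_coordAvg (v, false)]
    · simp_rw [coordAvg_mul_left hAv, sq]
      rfl
    · exact .of_bound (hA.mul hG).aestronglyMeasurable (C * C)
        (ae_of_all _ fun x => hCC _ _ (hAC x) (hC x))
  rw [hGA, h_copy, h_avg]
  exact sq_integral_le_integral_sq (.of_bound hA.aestronglyMeasurable C (ae_of_all _ hAC))

section Subcube

variable {V : Type*} [Fintype V] [DecidableEq V]

def subcube (s : Finset V) : Finset (V → Bool) :=
  Finset.univ.filter fun ω => ∀ w ∉ s, ω w = false

theorem mem_subcube {s : Finset V} {ω : V → Bool} : ω ∈ subcube s ↔ ∀ w ∉ s, ω w = false := by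
  simp [subcube]

theorem subcube_univ : subcube (Finset.univ : Finset V) = Finset.univ := by
  ext ω; simp [mem_subcube]

theorem subcube_empty : subcube (∅ : Finset V) = {fun _ => false} := by
  ext ω; simp [mem_subcube, funext_iff]

theorem prod_subcube_insert {M : Type*} [CommMonoid M] (g : (V → Bool) → M) {s : Finset V}
    {v : V} (hv : v ∉ s) :
    ∏ ω ∈ subcube (insert v s), g ω = ∏ ω ∈ subcube s, g ω * g (update ω v true) := by
  rw [Finset.prod_mul_distrib,
    ← Finset.prod_filter_mul_prod_filter_not (subcube (insert v s)) fun ω => ω v = false]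
  congr 1
  · congr 1
    ext ω
    grind [mem_subcube]
  · refine Finset.prod_nbij' (fun ω => update ω v false) (fun ω => update ω v true)
      ?_ ?_ ?_ ?_ ?_ <;> intro ω hω <;> grind [mem_subcube, update_idem, update_eq_self_iff]

variable {X : V → Type*}

def boxProd (f : (∀ v, X v) → ℝ) (s : Finset V) (x : ∀ p : V × Bool, X p.1) : ℝ :=
  ∏ ω ∈ subcube s, f fun v => x (v, ω v)

variable {f : (∀ v, X v) → ℝ} {s : Finset V} {v : V}

theorem boxProd_empty (x : ∀ p : V × Bool, X p.1) : boxProd f ∅ x = f fun v => x (v, false) := by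
  rw [boxProd, subcube_empty, Finset.prod_singleton]

theorem boxProd_insert (hv : v ∉ s) (x : ∀ p : V × Bool, X p.1) :
    boxProd f (insert v s) x
      = boxProd f s x * boxProd f s (update x (v, false) (x (v, true))) := by
  rw [boxProd, prod_subcube_insert _ hv, Finset.prod_mul_distrib]
  congr 1
  refine Finset.prod_congr rfl fun ω hω => congrArg f (funext fun w => ?_)
  have hωv := mem_subcube.mp hω v hv
  by_cases hw : w = v
  · subst hw
    rw [update_self, hωv, update_self]
  · rw [update_of_ne hw, update_of_ne fun h => hw (congrArg Prod.fst h)]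

theorem boxProd_update_true (hv : v ∉ s) (x : ∀ p : V × Bool, X p.1) (b : X v) :
    boxProd f s (update x (v, true) b) = boxProd f s x := by
  refine Finset.prod_congr rfl fun ω hω => congrArg f (funext fun w => ?_)
  have hωv := mem_subcube.mp hω v hv
  by_cases hw : w = v
  · subst hw; simp [hωv]
  · simp [hw]

theorem measurable_boxProd [∀ v, MeasurableSpace (X v)] (hf : Measurable f) (s : Finset V) :
    Measurable (boxProd f s) :=
  Finset.measurable_prod _ fun _ _ =>
    hf.comp (measurable_pi_lambda _ fun _ => measurable_pi_apply _)

theorem abs_boxProd_le {C : ℝ} (hC : ∀ x, |f x| ≤ C) (s : Finset V) (x : ∀ p : V × Bool, X p.1) :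
    |boxProd f s x| ≤ C ^ (subcube s).card := by
  rw [boxProd, Finset.abs_prod, ← Finset.prod_const]
  exact Finset.prod_le_prod (fun _ _ => abs_nonneg _) fun _ _ => hC _

end Subcube

section BoxIntegral

variable {V : Type} [Fintype V] [DecidableEq V] {X : V → Type} [∀ v, MeasurableSpace (X v)]
  (μ : ∀ v, Measure (X v)) {f : (∀ v, X v) → ℝ}

theorem boxInt_eq_integral_boxProd_univ :
    boxInt X μ f = ∫ x, boxProd f Finset.univ x ∂Measure.pi (fun p : V × Bool => μ p.1) := by
  simp only [boxInt, boxProd, subcube_univ]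

variable [∀ v, IsProbabilityMeasure (μ v)]

theorem integral_boxProd_empty (hf : Measurable f) :
    ∫ x, boxProd f ∅ x ∂Measure.pi (fun p : V × Bool => μ p.1) = ∫ x, f x ∂Measure.pi μ := by
  simp_rw [boxProd_empty]
  exact (measurePreserving_slice μ false).integral_comp_of_aestronglyMeasurable
    hf.aestronglyMeasurable

variable {C : ℝ} {s : Finset V} {v : V}

theorem sq_integral_boxProd_le (hf : Measurable f) (hC : ∀ x, |f x| ≤ C) (hv : v ∉ s) :
    (∫ x, boxProd f s x ∂Measure.pi fun p : V × Bool => μ p.1) ^ 2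
      ≤ ∫ x, boxProd f (insert v s) x ∂Measure.pi fun p : V × Bool => μ p.1 := by
  simp_rw [boxProd_insert hv]
  exact sq_integral_le_integral_mul_update (measurable_boxProd hf s) (abs_boxProd_le hC s) v
    (boxProd_update_true hv)

theorem pow_abs_integral_le_integral_boxProd (hf : Measurable f) (hC : ∀ x, |f x| ≤ C)
    (hs : s.Nonempty) :
    |∫ x, f x ∂Measure.pi μ| ^ 2 ^ s.card
      ≤ ∫ x, boxProd f s x ∂Measure.pi fun p : V × Bool => μ p.1 := by
  induction hs using Finset.Nonempty.cons_induction with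
  | singleton v =>
    simpa [sq_abs, integral_boxProd_empty μ hf] using
      sq_integral_boxProd_le μ hf hC (Finset.notMem_empty v)
  | cons v s hv _ ih =>
    rw [Finset.card_cons, pow_succ, pow_mul, Finset.cons_eq_insert]
    exact (pow_le_pow_left₀ (by positivity) ih 2).trans (sq_integral_boxProd_le μ hf hC hv)

end BoxIntegral

/-- For every bounded measurable `f`, `|∫ f dμ| ≤ ‖f‖_{□^V}`. -/
theorem abs_integral_le_boxNorm (V : Type) [Fintype V] [DecidableEq V] [Nonempty V]
    (X : V → Type) [∀ v, MeasurableSpace (X v)]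
    (μ : ∀ v, Measure (X v)) [∀ v, IsProbabilityMeasure (μ v)]
    (f : (∀ v, X v) → ℝ) (hfb : ∃ C, ∀ x, |f x| ≤ C) (hfm : Measurable f) :
    |∫ x, f x ∂(Measure.pi μ)| ≤ boxNorm X μ f := by
  obtain ⟨C, hC⟩ := hfb
  have h := pow_abs_integral_le_integral_boxProd μ hfm hC (Finset.univ_nonempty (α := V))
  rw [Finset.card_univ, ← boxInt_eq_integral_boxProd_univ μ] at h
  rw [boxNorm, one_div, ← Nat.cast_ofNat, ← Nat.cast_pow,
    Real.le_rpow_inv_iff_of_pos (abs_nonneg _) ((pow_nonneg (abs_nonneg _) _).trans h)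
      (by positivity),
    Real.rpow_natCast]
  exact h
end

section
/- Let f : X → ℝ be bounded and measurable. If ‖E[f | 𝒞_{<V}]‖_{L²(μ)} > 0, then ‖f‖_{□^V} > 0. -/
/-!
Gowers–Cauchy–Schwarz: if each `u_v` is bounded by `1` and does not depend on the coordinate `v`,
then `|∫ f ∏_v u_v|^(2^|V|) ≤ ∫ ∏_ω f(x^ω)`. It is proved by doubling the coordinates one at a
time; each doubling is one application of Cauchy–Schwarz after integrating out the two copies of
the new coordinate. If `‖f‖_{□^V} = 0`, taking indicators of sets in `𝒞_{V∖{v}}` for the `u_v`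
shows that `f` integrates to `0` over every set of a π-system generating `⨆_v 𝒞_{V∖{v}}`, a
σ-algebra containing `𝒞_{<V}`; hence `E[f | 𝒞_{<V}] = 0`.
-/

open MeasureTheory

/-- The σ-algebra `𝒞_{<V}` generated by `⋃_{I ⊊ V} 𝒞_I`. -/
def cylAlgLt {V : Type} (X : V → Type) [∀ v, MeasurableSpace (X v)] :
    MeasurableSpace (∀ v, X v) :=
  ⨆ (I : Set V) (_ : I ≠ Set.univ), cylAlg X I

open ProbabilityTheory Finset

namespace BoxNorm

section Doubling

variable {V : Type} {X : V → Type} [∀ v, MeasurableSpace (X v)]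

/-- The point `x^ω` of the paper. -/
def vertex (x : ∀ p : V × Bool, X p.1) (ω : V → Bool) : ∀ v, X v := fun v => x (v, ω v)

lemma measurable_vertex (ω : V → Bool) :
    Measurable fun x : ∀ p : V × Bool, X p.1 => vertex x ω :=
  measurable_pi_lambda _ fun v => measurable_pi_apply (v, ω v)

lemma measurePreserving_vertex [Fintype V] (μ : ∀ v, Measure (X v))
    [∀ v, IsProbabilityMeasure (μ v)] (ω : V → Bool) :
    MeasurePreserving (vertex · ω) (Measure.pi fun p : V × Bool => μ p.1) (Measure.pi μ) := by
  refine ⟨measurable_vertex ω, (Measure.pi_eq fun s hs => ?_).symm⟩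
  have hpre : (vertex · ω) ⁻¹' Set.univ.pi s =
      Set.univ.pi fun p : V × Bool => if p.2 = ω p.1 then s p.1 else Set.univ := by
    ext x
    simp only [Set.mem_preimage, Set.mem_univ_pi, vertex, Prod.forall]
    refine ⟨fun h v b => ?_, fun h v => by simpa using h v (ω v)⟩
    split_ifs with hb
    · exact hb ▸ h v
    · trivial
  rw [Measure.map_apply (measurable_vertex ω) (MeasurableSet.univ_pi hs), hpre, Measure.pi_pi,
    Fintype.prod_prod_type]
  refine Finset.prod_congr rfl fun v _ => ?_
  cases h : ω v <;> simp [h]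

def copyEquiv (u : V) : Bool ≃ {q : V × Bool // q.1 = u} where
  toFun b := ⟨(u, b), rfl⟩
  invFun q := q.1.2
  left_inv _ := rfl
  right_inv := by rintro ⟨⟨_, _⟩, rfl⟩; rfl

variable [DecidableEq V]

noncomputable def splitAt (u : V) :
    (X u × X u) × (∀ q : {q : V × Bool // ¬ q.1 = u}, X q.1.1) ≃ᵐ ∀ p : V × Bool, X p.1 :=
  (((MeasurableEquiv.piFinTwo fun _ => X u).symm.trans
    (MeasurableEquiv.piCongrLeft (fun q : {q : V × Bool // q.1 = u} => X q.1.1)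
      (finTwoEquiv.trans (copyEquiv u)))).prodCongr (MeasurableEquiv.refl _)).trans
    (MeasurableEquiv.piEquivPiSubtypeProd (fun p : V × Bool => X p.1) (·.1 = u)).symm

lemma splitAt_apply_of_ne {u : V} (w : X u × X u)
    (z : ∀ q : {q : V × Bool // ¬ q.1 = u}, X q.1.1) {v : V} (b : Bool) (hv : v ≠ u) :
    splitAt u (w, z) (v, b) = z ⟨(v, b), hv⟩ := by
  simp only [splitAt, MeasurableEquiv.piEquivPiSubtypeProd, MeasurableEquiv.symm_mk,
    MeasurableEquiv.trans_apply, MeasurableEquiv.coe_mk, Equiv.piEquivPiSubtypeProd_symm_apply, hv,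
    ↓reduceDIte]
  rfl

lemma splitAt_apply_self {u : V} (t t' : X u)
    (z : ∀ q : {q : V × Bool // ¬ q.1 = u}, X q.1.1) (b : Bool) :
    splitAt u ((t, t'), z) (u, b) = cond b t' t := by
  simp only [splitAt, MeasurableEquiv.piEquivPiSubtypeProd, MeasurableEquiv.symm_mk,
    MeasurableEquiv.trans_apply, MeasurableEquiv.coe_mk, Equiv.piEquivPiSubtypeProd_symm_apply,
    ↓reduceDIte]
  cases b
  · exact MeasurableEquiv.piCongrLeft_apply_apply
      (β := fun q : {q : V × Bool // q.1 = u} => X q.1.1) (finTwoEquiv.trans (copyEquiv u))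
      ((MeasurableEquiv.piFinTwo fun _ => X u).symm (t, t')) 0
  · exact MeasurableEquiv.piCongrLeft_apply_apply
      (β := fun q : {q : V × Bool // q.1 = u} => X q.1.1) (finTwoEquiv.trans (copyEquiv u))
      ((MeasurableEquiv.piFinTwo fun _ => X u).symm (t, t')) 1

lemma vertex_splitAt_of_ne {u : V} (w w' : X u × X u)
    (z : ∀ q : {q : V × Bool // ¬ q.1 = u}, X q.1.1) (ω : V → Bool) {v : V} (hv : v ≠ u) :
    vertex (splitAt u (w, z)) ω v = vertex (splitAt u (w', z)) ω v := by
  simp only [vertex, splitAt_apply_of_ne _ _ _ hv]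

lemma vertex_splitAt_of_false {u : V} (t t' : X u)
    (z : ∀ q : {q : V × Bool // ¬ q.1 = u}, X q.1.1) {ω : V → Bool} (hω : ω u = false) :
    vertex (splitAt u ((t, t'), z)) ω = vertex (splitAt u ((t, t), z)) ω := by
  funext v
  by_cases hv : v = u
  · subst hv
    simp only [vertex, splitAt_apply_self, hω, cond_false]
  · exact vertex_splitAt_of_ne _ _ z ω hv

lemma vertex_splitAt_update_true {u : V} (t t' : X u)
    (z : ∀ q : {q : V × Bool // ¬ q.1 = u}, X q.1.1) {ω : V → Bool} (hω : ω u = false) :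
    vertex (splitAt u ((t, t'), z)) (Function.update ω u true) =
      vertex (splitAt u ((t', t'), z)) ω := by
  funext v
  by_cases hv : v = u
  · subst hv
    simp only [vertex, splitAt_apply_self, hω, Function.update_self, cond_true, cond_false]
  · simp only [vertex]
    rw [Function.update_of_ne hv, splitAt_apply_of_ne _ _ _ hv, splitAt_apply_of_ne _ _ _ hv]

variable [Fintype V] (μ : ∀ v, Measure (X v)) [∀ v, SigmaFinite (μ v)]

lemma measurePreserving_splitAt (u : V) :
    MeasurePreserving (splitAt u)
      (((μ u).prod (μ u)).prod (Measure.pi fun q : {q : V × Bool // ¬ q.1 = u} => μ q.1.1))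
      (Measure.pi fun p : V × Bool => μ p.1) := by
  refine (measurePreserving_piEquivPiSubtypeProd (fun p : V × Bool => μ p.1) (·.1 = u)).symm _
    |>.comp (MeasurePreserving.prod ?_ (MeasurePreserving.id _))
  exact (measurePreserving_piCongrLeft (fun q : {q : V × Bool // q.1 = u} => μ q.1.1) _).comp
    ((measurePreserving_piFinTwo fun _ => μ u).symm _)

lemma integral_splitAt (u : V) {F : (∀ p : V × Bool, X p.1) → ℝ}
    (hF : Integrable F (Measure.pi fun p : V × Bool => μ p.1)) :
    ∫ x, F x ∂(Measure.pi fun p : V × Bool => μ p.1) =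
      ∫ z, ∫ w, F (splitAt u (w, z)) ∂((μ u).prod (μ u))
        ∂(Measure.pi fun q : {q : V × Bool // ¬ q.1 = u} => μ q.1.1) := by
  have hE := measurePreserving_splitAt μ u
  rw [← hE.integral_comp' F]
  exact integral_prod_symm _ (hE.integrable_comp_emb (splitAt u).measurableEmbedding |>.mpr hF)

end Doubling

section Face

variable {V : Type} [Fintype V] [DecidableEq V]

def face (S : Finset V) : Finset (V → Bool) := univ.filter fun ω => ∀ v ∉ S, ω v = false

lemma mem_face {S : Finset V} {ω : V → Bool} : ω ∈ face S ↔ ∀ v ∉ S, ω v = false := by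
  simp [face]

lemma face_empty : face (∅ : Finset V) = {fun _ => false} := by
  ext ω
  simp only [mem_face, Finset.notMem_empty, not_false_eq_true, forall_const, mem_singleton]
  exact ⟨funext, fun h v => congrFun h v⟩

lemma face_univ : face (univ : Finset V) = univ := by
  ext ω
  simp [mem_face]

lemma prod_face_insert {M : Type*} [CommMonoid M] {S : Finset V} {u : V} (hu : u ∉ S)
    (F : (V → Bool) → M) :
    ∏ η ∈ face (insert u S), F η =
      (∏ ω ∈ face S, F ω) * ∏ ω ∈ face S, F (Function.update ω u true) := by
  rw [← Finset.prod_filter_mul_prod_filter_not (face (insert u S)) (fun η => η u = false)]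
  congr 1
  · congr 1
    ext η
    simp only [mem_filter, mem_face, mem_insert]
    grind
  · refine Finset.prod_nbij' (Function.update · u false) (Function.update · u true)
      ?_ ?_ ?_ ?_ ?_
    · intro η hη
      simp only [mem_filter, mem_face, mem_insert] at hη ⊢
      intro v hv
      by_cases hvu : v = u
      · simp [hvu]
      · rw [Function.update_of_ne hvu]
        exact hη.1 v (by simp [hv, hvu])
    · intro ω hω
      simp only [mem_filter, mem_face, mem_insert, not_or] at hω ⊢
      refine ⟨fun v hv => ?_, by simp⟩
      rw [Function.update_of_ne hv.1]
      exact hω v hv.2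
    · intro η hη
      simp only [mem_filter, Bool.not_eq_false] at hη
      simp [← hη.2]
    · intro ω hω
      simp [← mem_face.1 hω u hu]
    · intro η hη
      simp only [mem_filter, Bool.not_eq_false] at hη
      simp [← hη.2]

end Face

section CubeProd

variable {V : Type} [Fintype V] [DecidableEq V] {X : V → Type}

def cubeProd (g : (∀ v, X v) → ℝ) (S : Finset V) (x : ∀ p : V × Bool, X p.1) : ℝ :=
  ∏ ω ∈ face S, g (vertex x ω)

lemma cubeProd_mul (g h : (∀ v, X v) → ℝ) (S : Finset V) :
    cubeProd (g * h) S = cubeProd g S * cubeProd h S :=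
  funext fun _ => Finset.prod_mul_distrib

lemma abs_cubeProd_le {g : (∀ v, X v) → ℝ} {C : ℝ} (hg : ∀ x, |g x| ≤ C) (S : Finset V)
    (x : ∀ p : V × Bool, X p.1) : |cubeProd g S x| ≤ C ^ #(face S) := by
  rw [cubeProd, Finset.abs_prod, ← Finset.prod_const]
  exact Finset.prod_le_prod (fun _ _ => abs_nonneg _) fun ω _ => hg _

variable [∀ v, MeasurableSpace (X v)]

lemma measurable_cubeProd {g : (∀ v, X v) → ℝ} (hg : Measurable g) (S : Finset V) :
    Measurable (cubeProd g S) :=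
  Finset.measurable_prod _ fun ω _ => hg.comp (measurable_vertex ω)

lemma boxInt_eq_integral_cubeProd_univ (μ : ∀ v, Measure (X v)) (f : (∀ v, X v) → ℝ) :
    boxInt X μ f = ∫ x, cubeProd f univ x ∂(Measure.pi fun p : V × Bool => μ p.1) := by
  simp only [boxInt, cubeProd, face_univ]
  rfl

variable (μ : ∀ v, Measure (X v)) [∀ v, IsProbabilityMeasure (μ v)]

lemma integrable_cubeProd {g : (∀ v, X v) → ℝ} {C : ℝ} (hg : Measurable g)
    (hgC : ∀ x, |g x| ≤ C) (S : Finset V) :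
    Integrable (cubeProd g S) (Measure.pi fun p : V × Bool => μ p.1) :=
  .of_bound (measurable_cubeProd hg S).aestronglyMeasurable _
    (.of_forall fun x => abs_cubeProd_le hgC S x)

lemma integral_cubeProd_empty {g : (∀ v, X v) → ℝ} (hg : Measurable g) :
    ∫ x, cubeProd g ∅ x ∂(Measure.pi fun p : V × Bool => μ p.1) = ∫ x, g x ∂Measure.pi μ := by
  rw [← (measurePreserving_vertex μ fun _ => false).map_eq,
    integral_map (measurable_vertex _).aemeasurable hg.aestronglyMeasurable]
  simp [cubeProd, face_empty]

end CubeProd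

lemma sq_integral_mul_le_integral_sq {Ω : Type*} [MeasurableSpace Ω] {ν : Measure Ω}
    [IsProbabilityMeasure ν] {Ψ G : Ω → ℝ} (hΨ : AEStronglyMeasurable Ψ ν)
    (hΨ1 : ∀ z, |Ψ z| ≤ 1) (hG : MemLp G 2 ν) :
    (∫ z, Ψ z * G z ∂ν) ^ 2 ≤ ∫ z, G z ^ 2 ∂ν := by
  have hΨG : MemLp (fun z => Ψ z * G z) 2 ν :=
    hG.of_le (hΨ.mul hG.aestronglyMeasurable) (.of_forall fun z => by
      simpa [abs_mul] using mul_le_of_le_one_left (abs_nonneg _) (hΨ1 z))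
  calc (∫ z, Ψ z * G z ∂ν) ^ 2 ≤ ∫ z, (Ψ z * G z) ^ 2 ∂ν := by
        have := variance_nonneg (fun z => Ψ z * G z) ν
        rw [variance_eq_sub hΨG] at this
        simpa using this
    _ ≤ ∫ z, G z ^ 2 ∂ν :=
        integral_mono hΨG.integrable_sq hG.integrable_sq fun z => by
          rw [mul_pow]
          exact mul_le_of_le_one_left (sq_nonneg _) ((sq_le_one_iff_abs_le_one _).2 (hΨ1 z))

section Slicing

variable {V : Type} [Fintype V] [DecidableEq V] {X : V → Type} [∀ v, MeasurableSpace (X v)]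
  {u : V} {S : Finset V}

lemma cubeProd_splitAt_of_notMem (hu : u ∉ S) (g : (∀ v, X v) → ℝ) (t t' : X u)
    (z : ∀ q : {q : V × Bool // ¬ q.1 = u}, X q.1.1) :
    cubeProd g S (splitAt u ((t, t'), z)) = cubeProd g S (splitAt u ((t, t), z)) :=
  Finset.prod_congr rfl fun ω hω => by
    rw [vertex_splitAt_of_false t t' z (mem_face.1 hω u hu)]

lemma cubeProd_insert_splitAt (hu : u ∉ S) (g : (∀ v, X v) → ℝ) (t t' : X u)
    (z : ∀ q : {q : V × Bool // ¬ q.1 = u}, X q.1.1) :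
    cubeProd g (insert u S) (splitAt u ((t, t'), z)) =
      cubeProd g S (splitAt u ((t, t), z)) * cubeProd g S (splitAt u ((t', t'), z)) := by
  rw [cubeProd, prod_face_insert hu, ← cubeProd, cubeProd_splitAt_of_notMem hu]
  exact congrArg _ (Finset.prod_congr rfl fun ω hω => by
    rw [vertex_splitAt_update_true t t' z (mem_face.1 hω u hu)])

lemma cubeProd_splitAt_congr {h : (∀ v, X v) → ℝ}
    (hhu : ∀ x y : ∀ v, X v, (∀ v ≠ u, x v = y v) → h x = h y) (S : Finset V)
    (w w' : X u × X u) (z : ∀ q : {q : V × Bool // ¬ q.1 = u}, X q.1.1) :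
    cubeProd h S (splitAt u (w, z)) = cubeProd h S (splitAt u (w', z)) :=
  Finset.prod_congr rfl fun ω _ => hhu _ _ fun _ hv => vertex_splitAt_of_ne w w' z ω hv

variable (μ : ∀ v, Measure (X v))

noncomputable def sliceIntegral (g : (∀ v, X v) → ℝ) (S : Finset V) (u : V)
    (z : ∀ q : {q : V × Bool // ¬ q.1 = u}, X q.1.1) : ℝ :=
  ∫ t, cubeProd g S (splitAt u ((t, t), z)) ∂μ u

variable [∀ v, IsProbabilityMeasure (μ v)] {g h : (∀ v, X v) → ℝ} {C : ℝ}

lemma memLp_sliceIntegral (hg : Measurable g) (hgC : ∀ x, |g x| ≤ C) (S : Finset V) (u : V) :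
    MemLp (sliceIntegral μ g S u) 2
      (Measure.pi fun q : {q : V × Bool // ¬ q.1 = u} => μ q.1.1) := by
  have hmeas : Measurable fun p : _ × X u => cubeProd g S (splitAt u ((p.2, p.2), p.1)) :=
    (measurable_cubeProd hg S).comp ((splitAt u).measurable.comp (by fun_prop))
  refine .of_bound (hmeas.stronglyMeasurable.integral_prod_right' (ν := μ u)).aestronglyMeasurable
    (C ^ #(face S)) (.of_forall fun z => ?_)
  simpa [sliceIntegral] using norm_integral_le_of_norm_le_const (μ := μ u)
    (f := fun t => cubeProd g S (splitAt u ((t, t), z)))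
    (.of_forall fun t => (Real.norm_eq_abs _).trans_le (abs_cubeProd_le hgC S _))

lemma integral_cubeProd_insert (hu : u ∉ S) (hg : Measurable g) (hgC : ∀ x, |g x| ≤ C) :
    ∫ x, cubeProd g (insert u S) x ∂(Measure.pi fun p : V × Bool => μ p.1) =
      ∫ z, sliceIntegral μ g S u z ^ 2
        ∂(Measure.pi fun q : {q : V × Bool // ¬ q.1 = u} => μ q.1.1) := by
  rw [integral_splitAt μ u (integrable_cubeProd μ hg hgC _)]
  refine integral_congr_ae (.of_forall fun z => ?_)
  simp only [cubeProd_insert_splitAt hu]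
  exact (integral_prod_mul (fun t => cubeProd g S (splitAt u ((t, t), z)))
    (fun t => cubeProd g S (splitAt u ((t, t), z)))).trans (by rw [sq]; rfl)

lemma integral_cubeProd_mul (hu : u ∉ S) (hg : Measurable g) (hgC : ∀ x, |g x| ≤ C)
    (hh : Measurable h) (hh1 : ∀ x, |h x| ≤ 1)
    (hhu : ∀ x y : ∀ v, X v, (∀ v ≠ u, x v = y v) → h x = h y) (w₀ : X u × X u) :
    ∫ x, cubeProd (g * h) S x ∂(Measure.pi fun p : V × Bool => μ p.1) =
      ∫ z, cubeProd h S (splitAt u (w₀, z)) * sliceIntegral μ g S u z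
        ∂(Measure.pi fun q : {q : V × Bool // ¬ q.1 = u} => μ q.1.1) := by
  have hgh : ∀ x, |(g * h) x| ≤ C := fun x => by
    rw [Pi.mul_apply, abs_mul]
    exact (mul_le_of_le_one_right (abs_nonneg _) (hh1 x)).trans (hgC x)
  rw [integral_splitAt μ u (integrable_cubeProd μ (hg.mul hh) hgh S)]
  refine integral_congr_ae (.of_forall fun z => ?_)
  calc ∫ w, cubeProd (g * h) S (splitAt u (w, z)) ∂(μ u).prod (μ u)
      = ∫ w : X u × X u, cubeProd g S (splitAt u ((w.1, w.1), z)) *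
          cubeProd h S (splitAt u (w₀, z)) ∂(μ u).prod (μ u) := by
        simp only [cubeProd_mul, Pi.mul_apply, cubeProd_splitAt_congr hhu S _ w₀ z]
        exact integral_congr_ae (.of_forall fun ⟨t, t'⟩ =>
          congrArg (· * _) (cubeProd_splitAt_of_notMem hu g t t' z))
    _ = cubeProd h S (splitAt u (w₀, z)) * sliceIntegral μ g S u z := by
        rw [integral_fun_fst (fun t => cubeProd g S (splitAt u ((t, t), z)) *
          cubeProd h S (splitAt u (w₀, z))), integral_mul_const]
        simp [sliceIntegral, mul_comm]

end Slicing

section GowersCauchySchwarz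

variable {V : Type} [Fintype V] [DecidableEq V] {X : V → Type} [∀ v, MeasurableSpace (X v)]
  (μ : ∀ v, Measure (X v)) [∀ v, IsProbabilityMeasure (μ v)]

/-- One doubling step: Cauchy–Schwarz in the coordinates other than `u`, the factor coming from
`h` being bounded by `1` and independent of both copies of `u`. -/
theorem sq_integral_cubeProd_mul_le {g h : (∀ v, X v) → ℝ} {C : ℝ}
    (hg : Measurable g) (hgC : ∀ x, |g x| ≤ C) (hh : Measurable h) (hh1 : ∀ x, |h x| ≤ 1)
    {u : V} (hhu : ∀ x y : ∀ v, X v, (∀ v ≠ u, x v = y v) → h x = h y)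
    {S : Finset V} (hu : u ∉ S) :
    (∫ x, cubeProd (g * h) S x ∂(Measure.pi fun p : V × Bool => μ p.1)) ^ 2 ≤
      ∫ x, cubeProd g (insert u S) x ∂(Measure.pi fun p : V × Bool => μ p.1) := by
  obtain ⟨d⟩ := nonempty_of_isProbabilityMeasure (μ u)
  rw [integral_cubeProd_mul μ hu hg hgC hh hh1 hhu (d, d), integral_cubeProd_insert μ hu hg hgC]
  exact sq_integral_mul_le_integral_sq
    ((measurable_cubeProd hh S).comp ((splitAt u).measurable.comp measurable_prodMk_left)
      |>.aestronglyMeasurable)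
    (fun z => (abs_cubeProd_le hh1 S _).trans_eq (one_pow _)) (memLp_sliceIntegral μ hg hgC S u)

variable {f : (∀ v, X v) → ℝ} {u : V → (∀ v, X v) → ℝ} {M : ℝ}

omit [∀ v, MeasurableSpace (X v)] in
lemma mul_prod_compl_insert_mul {a : V} {S : Finset V} (ha : a ∉ S) :
    (fun x => f x * ∏ v ∈ (insert a S)ᶜ, u v x) * u a = fun x => f x * ∏ v ∈ Sᶜ, u v x := by
  funext x
  rw [Pi.mul_apply, ← Finset.mul_prod_erase _ _ (Finset.mem_compl.2 ha), Finset.compl_insert]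
  ring

variable (hfm : Measurable f) (hfb : ∀ x, |f x| ≤ M) (hum : ∀ v, Measurable (u v))
  (hub : ∀ v x, |u v x| ≤ 1) (hui : ∀ v (x y : ∀ w, X w), (∀ w ≠ v, x w = y w) → u v x = u v y)
include hfm hfb hum hub hui

lemma sq_integral_cubeProd_le_insert {a : V} {S : Finset V} (ha : a ∉ S) :
    (∫ x, cubeProd (fun y => f y * ∏ v ∈ Sᶜ, u v y) S x
      ∂(Measure.pi fun p : V × Bool => μ p.1)) ^ 2 ≤
    ∫ x, cubeProd (fun y => f y * ∏ v ∈ (insert a S)ᶜ, u v y) (insert a S) x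
      ∂(Measure.pi fun p : V × Bool => μ p.1) := by
  rw [← mul_prod_compl_insert_mul ha]
  refine sq_integral_cubeProd_mul_le μ (C := M)
    (hfm.mul (Finset.measurable_prod _ fun v _ => hum v)) (fun x => ?_) (hum a) (hub a) (hui a) ha
  rw [Pi.mul_apply, abs_mul, Finset.abs_prod]
  exact mul_le_of_le_one_right (abs_nonneg _) (Finset.prod_le_one (fun _ _ => abs_nonneg _)
    fun v _ => hub v x) |>.trans (hfb x)

theorem pow_abs_integral_mul_prod_le {S : Finset V} (hS : S.Nonempty) :
    |∫ x, f x * ∏ v, u v x ∂Measure.pi μ| ^ 2 ^ #S ≤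
      ∫ x, cubeProd (fun y => f y * ∏ v ∈ Sᶜ, u v y) S x
        ∂(Measure.pi fun p : V × Bool => μ p.1) := by
  induction hS using Finset.Nonempty.cons_induction with
  | singleton a =>
    have h := sq_integral_cubeProd_le_insert μ hfm hfb hum hub hui (Finset.notMem_empty a)
    rw [integral_cubeProd_empty μ (g := fun y => f y * ∏ v ∈ ∅ᶜ, u v y)
      (hfm.mul (Finset.measurable_prod _ fun v _ => hum v))] at h
    simpa [sq_abs] using h
  | cons a S ha _ ih =>
    rw [Finset.card_cons, pow_succ, pow_mul, Finset.cons_eq_insert]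
    exact (pow_le_pow_left₀ (by positivity) ih 2).trans
      (sq_integral_cubeProd_le_insert μ hfm hfb hum hub hui ha)

/-- The Gowers–Cauchy–Schwarz inequality. -/
theorem pow_abs_integral_mul_prod_le_boxInt [Nonempty V] :
    |∫ x, f x * ∏ v, u v x ∂Measure.pi μ| ^ 2 ^ Fintype.card V ≤ boxInt X μ f := by
  simpa [boxInt_eq_integral_cubeProd_univ] using
    pow_abs_integral_mul_prod_le μ hfm hfb hum hub hui univ_nonempty

omit hum hub hui in
theorem boxInt_nonneg [Nonempty V] : 0 ≤ boxInt X μ f :=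
  (pow_nonneg (abs_nonneg _) _).trans <| pow_abs_integral_mul_prod_le_boxInt μ
    (u := fun _ _ => 1) hfm hfb (fun _ => measurable_const) (fun _ _ => by simp)
    fun _ _ _ _ => rfl

end GowersCauchySchwarz

section CylinderAlgebras

variable {V : Type} {X : V → Type} [∀ v, MeasurableSpace (X v)]

lemma cylAlg_le_pi (I : Set V) : cylAlg X I ≤ MeasurableSpace.pi :=
  (measurable_pi_lambda _ fun _ => measurable_pi_apply _).comap_le

lemma cylAlg_mono {I J : Set V} (hIJ : I ⊆ J) : cylAlg X I ≤ cylAlg X J := by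
  have hres : Measurable fun (y : ∀ j : J, X j) (i : I) => y ⟨i, hIJ i.2⟩ :=
    measurable_pi_lambda _ fun i => measurable_pi_apply _
  calc cylAlg X I
      = (MeasurableSpace.pi.comap fun (y : ∀ j : J, X j) (i : I) => y ⟨i, hIJ i.2⟩).comap
          fun (x : ∀ v, X v) (j : J) => x j := by
        rw [MeasurableSpace.comap_comp]
        rfl
    _ ≤ cylAlg X J := MeasurableSpace.comap_mono hres.comap_le

lemma cylAlgLt_le_pi : cylAlgLt X ≤ MeasurableSpace.pi :=
  iSup₂_le fun I _ => cylAlg_le_pi I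

lemma cylAlgLt_le_iSup_cylAlg_compl : cylAlgLt X ≤ ⨆ v, cylAlg X {v}ᶜ := by
  refine iSup₂_le fun I hI => ?_
  obtain ⟨v, hv⟩ := (Set.ne_univ_iff_exists_notMem I).1 hI
  exact (cylAlg_mono (Set.subset_compl_singleton_iff.2 hv)).trans
    (le_iSup (fun v => cylAlg X {v}ᶜ) v)

lemma mem_iff_of_measurableSet_cylAlg {I : Set V} {s : Set (∀ v, X v)}
    (hs : MeasurableSet[cylAlg X I] s) {x y : ∀ v, X v} (hxy : ∀ i ∈ I, x i = y i) :
    x ∈ s ↔ y ∈ s := by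
  obtain ⟨t, -, rfl⟩ := hs
  simp only [Set.mem_preimage]
  rw [show (fun i : I => x i) = fun i : I => y i from funext fun i => hxy i i.2]

end CylinderAlgebras

section Orthogonality

variable {V : Type} [Fintype V] [DecidableEq V] [Nonempty V] {X : V → Type}
  [∀ v, MeasurableSpace (X v)] (μ : ∀ v, Measure (X v)) [∀ v, IsProbabilityMeasure (μ v)]
  {f : (∀ v, X v) → ℝ} {M : ℝ}
  (hfm : Measurable f) (hfb : ∀ x, |f x| ≤ M) (hbox : boxInt X μ f = 0)
include hfm hfb hbox

theorem setIntegral_iInter_eq_zero_of_boxInt_eq_zero {A : V → Set (∀ v, X v)}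
    (hA : ∀ v, MeasurableSet[cylAlg X {v}ᶜ] (A v)) :
    ∫ x in ⋂ v, A v, f x ∂Measure.pi μ = 0 := by
  have hGCS := pow_abs_integral_mul_prod_le_boxInt μ (u := fun v => (A v).indicator 1) hfm hfb
    (fun v => measurable_const.indicator (cylAlg_le_pi _ _ (hA v)))
    (fun v x => by by_cases hx : x ∈ A v <;> simp [hx])
    (fun v x y hxy => by
      have hmem := mem_iff_of_measurableSet_cylAlg (hA v) fun w hw =>
        hxy w (Set.mem_compl_singleton_iff.1 hw)
      show (A v).indicator 1 x = (A v).indicator 1 y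
      by_cases hx : x ∈ A v
      · simp [hx, hmem.1 hx]
      · simp [hx, mt hmem.2 hx])
  rw [hbox] at hGCS
  have hzero := abs_eq_zero.1 <| (pow_eq_zero_iff (pow_ne_zero _ two_ne_zero)).1 <|
    le_antisymm hGCS (by positivity)
  rw [← integral_indicator (MeasurableSet.iInter fun v => cylAlg_le_pi _ _ (hA v))]
  refine (integral_congr_ae (.of_forall fun x => ?_)).trans hzero
  rw [prod_indicator_const_apply]
  by_cases hx : x ∈ ⋂ v, A v <;> simp_all

theorem setIntegral_eq_zero_of_boxInt_eq_zero {s : Set (∀ v, X v)}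
    (hs : MeasurableSet[⨆ v, cylAlg X {v}ᶜ] s) : ∫ x in s, f x ∂Measure.pi μ = 0 := by
  have hint : Integrable f (Measure.pi μ) := .of_bound hfm.aestronglyMeasurable M (.of_forall hfb)
  have hle : (⨆ v, cylAlg X {v}ᶜ) ≤ MeasurableSpace.pi := iSup_le fun v => cylAlg_le_pi _
  have hgen : (⨆ v, cylAlg X {v}ᶜ) = MeasurableSpace.generateFrom
      (piiUnionInter (fun v => {s | MeasurableSet[cylAlg X {v}ᶜ] s}) Set.univ) := by
    simpa using (generateFrom_piiUnionInter_measurableSet (fun v => cylAlg X {v}ᶜ) Set.univ).symm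
  have hbasic : ∀ t ∈ piiUnionInter (fun v => {s | MeasurableSet[cylAlg X {v}ᶜ] s}) Set.univ,
      ∫ x in t, f x ∂Measure.pi μ = 0 := by
    rintro _ ⟨T, -, F, hF, rfl⟩
    have hT : ⋂ v ∈ T, F v = ⋂ v, if v ∈ T then F v else Set.univ := by
      ext x
      simp
    rw [hT]
    refine setIntegral_iInter_eq_zero_of_boxInt_eq_zero μ hfm hfb hbox fun v => ?_
    split_ifs with hv
    · exact hF v hv
    · exact @MeasurableSet.univ _ (cylAlg X {v}ᶜ)
  have huniv : ∫ x, f x ∂Measure.pi μ = 0 := by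
    simpa using setIntegral_iInter_eq_zero_of_boxInt_eq_zero μ hfm hfb hbox
      (A := fun _ => Set.univ) fun v => @MeasurableSet.univ _ (cylAlg X {v}ᶜ)
  induction s, hs using MeasurableSpace.induction_on_inter hgen
    (isPiSystem_piiUnionInter _
      (fun v => @MeasurableSpace.isPiSystem_measurableSet _ (cylAlg X {v}ᶜ)) _) with
  | empty => simp
  | basic t ht => exact hbasic t ht
  | compl t ht iht =>
    have := integral_add_compl (hle t ht) hint
    rw [iht, huniv] at this
    linarith
  | iUnion g hdisj hgm ihg =>
    rw [integral_iUnion (fun i => hle _ (hgm i)) hdisj hint.integrableOn]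
    simp [ihg]

theorem condExp_cylAlgLt_ae_eq_zero : (Measure.pi μ)[f | cylAlgLt X] =ᵐ[Measure.pi μ] 0 := by
  refine (ae_eq_condExp_of_forall_setIntegral_eq cylAlgLt_le_pi
    (.of_bound hfm.aestronglyMeasurable M (.of_forall hfb)) (fun _ _ _ => integrableOn_zero)
    (fun s hs _ => ?_) aestronglyMeasurable_zero).symm
  rw [integral_zero, setIntegral_eq_zero_of_boxInt_eq_zero μ hfm hfb hbox
    (cylAlgLt_le_iSup_cylAlg_compl s hs)]

end Orthogonality

end BoxNorm

/-- If `‖E[f | 𝒞_{<V}]‖_{L²(μ)} > 0` then `‖f‖_{□^V} > 0`. -/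
theorem boxNorm_pos_of_condexp (V : Type) [Fintype V] [DecidableEq V] [Nonempty V]
    (X : V → Type) [∀ v, MeasurableSpace (X v)]
    (μ : ∀ v, Measure (X v)) [∀ v, IsProbabilityMeasure (μ v)]
    (f : (∀ v, X v) → ℝ) (hfb : ∃ C, ∀ x, |f x| ≤ C) (hfm : Measurable f)
    (h : 0 < eLpNorm (MeasureTheory.condExp (cylAlgLt X) (Measure.pi μ) f) 2
        (Measure.pi μ)) :
    0 < boxNorm X μ f := by
  obtain ⟨M, hfb⟩ := hfb
  have hpos : 0 < boxInt X μ f := by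
    refine (BoxNorm.boxInt_nonneg μ hfm hfb).lt_of_ne fun hbox => h.ne' ?_
    rw [eLpNorm_congr_ae (BoxNorm.condExp_cylAlgLt_ae_eq_zero μ hfm hfb hbox.symm), eLpNorm_zero]
  exact Real.rpow_pos_of_pos hpos _
end

section
/- Let f : X → ℝ be bounded and measurable. If E[f | 𝒞_{<V}] = 0 μ-almost everywhere, then ‖f‖_{□^V} = 0. -/
open MeasureTheory

/-! Identify `X⁺` with `X × X` via `boxSplit`, sending `(y, x)` to the point whose `true`-copy is
`y` and whose `false`-copy is `x`; then `x^ω = boxVertex ω y x` takes its coordinates from `y` where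
`ω = 1` and from `x` where `ω = 0`, and by Fubini the box integral is
`∫_y ∫_x ∏_ω f (boxVertex ω y x)`. For fixed `y`, each factor with `ω ≠ 0` depends only on the
coordinates in `{v | ω v = 0} ⊊ V`, hence is `𝒞_{<V}`-measurable. Pulling the bounded product
`g_y` of these factors out of the conditional expectation gives
`∫_x g_y f = ∫_x g_y E[f | 𝒞_{<V}] = 0`. -/

section

variable {V : Type} {X : V → Type}

lemma norm_prod_le_pow_card {ι 𝕜 : Type*} [NormedField 𝕜] (s : Finset ι) {g : ι → 𝕜} {C : ℝ}
    (h : ∀ i ∈ s, ‖g i‖ ≤ C) : ‖∏ i ∈ s, g i‖ ≤ C ^ s.card := by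
  rw [norm_prod, ← Finset.prod_const]
  exact Finset.prod_le_prod (fun _ _ => norm_nonneg _) h

theorem integral_mul_eq_zero_of_condExp_eq_zero {Ω : Type*} {m mΩ : MeasurableSpace Ω}
    {μ : Measure Ω} [IsFiniteMeasure μ] (hm : m ≤ mΩ) {f g : Ω → ℝ}
    (hg : StronglyMeasurable[m] g) (c : ℝ) (hg_bound : ∀ᵐ x ∂μ, ‖g x‖ ≤ c)
    (hf : Integrable f μ) (hf_cond : μ[f | m] =ᵐ[μ] 0) :
    ∫ x, g x * f x ∂μ = 0 :=
  calc ∫ x, g x * f x ∂μ = ∫ x, (μ[g * f | m]) x ∂μ := (integral_condExp hm).symm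
    _ = 0 := integral_eq_zero_of_ae <| by
      filter_upwards [condExp_stronglyMeasurable_mul_of_bound hm hg hf c hg_bound, hf_cond]
        with x hx hx0
      simp [hx, hx0]

def boxVertex (ω : V → Bool) (y x : ∀ v, X v) : ∀ v, X v :=
  fun v => cond (ω v) (y v) (x v)

def boxSplit (z : (∀ v, X v) × (∀ v, X v)) : ∀ p : V × Bool, X p.1 :=
  fun p => cond p.2 (z.1 p.1) (z.2 p.1)

lemma boxSplit_preimage_univ_pi (s : ∀ p : V × Bool, Set (X p.1)) :
    boxSplit ⁻¹' Set.univ.pi s =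
      (Set.univ.pi fun v => s (v, true)) ×ˢ (Set.univ.pi fun v => s (v, false)) := by
  ext z
  simp only [Set.mem_preimage, Set.mem_univ_pi, Set.mem_prod, Prod.forall, Bool.forall_bool]
  exact ⟨fun h => ⟨fun v => (h v).2, fun v => (h v).1⟩, fun h v => ⟨h.2 v, h.1 v⟩⟩

variable [∀ v, MeasurableSpace (X v)]

lemma cylAlgLt_le_pi : cylAlgLt X ≤ MeasurableSpace.pi :=
  iSup₂_le fun _ _ =>
    measurable_iff_comap_le.mp (measurable_pi_lambda _ fun _ => measurable_pi_apply _)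

lemma cylAlg_le_cylAlgLt {I : Set V} (hI : I ≠ Set.univ) : cylAlg X I ≤ cylAlgLt X :=
  le_iSup₂ (f := fun (I : Set V) (_ : I ≠ Set.univ) => cylAlg X I) I hI

lemma measurable_cylAlg_apply {I : Set V} {v : V} (hv : v ∈ I) :
    Measurable[cylAlg X I] fun x : ∀ v, X v => x v :=
  (measurable_pi_apply (⟨v, hv⟩ : I)).comp
    (comap_measurable fun (x : ∀ v, X v) (i : I) => x i)

lemma measurable_boxVertex_cylAlg (ω : V → Bool) (y : ∀ v, X v) :
    Measurable[cylAlg X {v | ω v = false}, MeasurableSpace.pi] (boxVertex ω y) := by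
  refine @measurable_pi_lambda _ _ _ (cylAlg X _) _ _ fun v => ?_
  dsimp only [boxVertex]
  cases hv : ω v
  · exact measurable_cylAlg_apply (X := X) (show v ∈ {v | ω v = false} from hv)
  · exact measurable_const

lemma measurable_cylAlgLt_comp_boxVertex {f : (∀ v, X v) → ℝ} (hf : Measurable f)
    {ω : V → Bool} (hω : ω ≠ fun _ => false) (y : ∀ v, X v) :
    Measurable[cylAlgLt X] fun x => f (boxVertex ω y x) := by
  obtain ⟨v, hv⟩ := Function.ne_iff.mp hω
  have hI : {v | ω v = false} ≠ Set.univ := (Set.ne_univ_iff_exists_notMem _).mpr ⟨v, hv⟩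
  exact (hf.comp (measurable_boxVertex_cylAlg ω y)).mono (cylAlg_le_cylAlgLt hI) le_rfl

lemma measurable_boxSplit : Measurable (boxSplit (X := X)) := by
  refine measurable_pi_lambda _ fun ⟨v, b⟩ => ?_
  cases b
  · exact (measurable_pi_apply v).comp measurable_snd
  · exact (measurable_pi_apply v).comp measurable_fst

theorem measurePreserving_boxSplit [Fintype V] (μ : ∀ v, Measure (X v))
    [∀ v, SigmaFinite (μ v)] :
    MeasurePreserving boxSplit ((Measure.pi μ).prod (Measure.pi μ))
      (Measure.pi fun p : V × Bool => μ p.1) := by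
  refine ⟨measurable_boxSplit, (Measure.pi_eq fun s hs => ?_).symm⟩
  rw [Measure.map_apply measurable_boxSplit (.univ_pi hs), boxSplit_preimage_univ_pi,
    Measure.prod_prod, Measure.pi_pi, Measure.pi_pi, Fintype.prod_prod_type]
  simp [Finset.prod_mul_distrib, mul_comm]

theorem integral_prod_boxVertex_eq_zero [Fintype V] [DecidableEq V] {ν : Measure (∀ v, X v)}
    [IsFiniteMeasure ν]
    {f : (∀ v, X v) → ℝ} (hf : Measurable f) {C : ℝ} (hC : ∀ x, ‖f x‖ ≤ C)
    (hf_cond : ν[f | cylAlgLt X] =ᵐ[ν] 0) (y : ∀ v, X v) :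
    ∫ x, ∏ ω : V → Bool, f (boxVertex ω y x) ∂ν = 0 := by
  have hsplit : ∀ x, ∏ ω : V → Bool, f (boxVertex ω y x) =
      (∏ ω ∈ Finset.univ.erase (fun _ => false), f (boxVertex ω y x)) * f x := fun x =>
    (Finset.prod_erase_mul _ _ (Finset.mem_univ _)).symm
  simp_rw [hsplit]
  refine integral_mul_eq_zero_of_condExp_eq_zero cylAlgLt_le_pi ?_ _
    (ae_of_all _ fun x => norm_prod_le_pow_card _ fun ω _ => hC _)
    (.of_bound hf.aestronglyMeasurable C (ae_of_all _ hC)) hf_cond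
  exact (Finset.measurable_prod _ fun ω hω =>
    measurable_cylAlgLt_comp_boxVertex hf (Finset.ne_of_mem_erase hω) y).stronglyMeasurable

theorem boxInt_eq_integral_integral [Fintype V] [DecidableEq V] (μ : ∀ v, Measure (X v))
    [∀ v, IsFiniteMeasure (μ v)] {f : (∀ v, X v) → ℝ} (hf : Measurable f) {C : ℝ}
    (hC : ∀ x, ‖f x‖ ≤ C) :
    boxInt X μ f = ∫ y, ∫ x, ∏ ω : V → Bool, f (boxVertex ω y x) ∂Measure.pi μ ∂Measure.pi μ := by
  have hF : Measurable fun x : ∀ p : V × Bool, X p.1 => ∏ ω : V → Bool, f fun v => x (v, ω v) :=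
    Finset.measurable_prod _ fun ω _ =>
      hf.comp (measurable_pi_lambda _ fun v => measurable_pi_apply _)
  rw [boxInt, ← (measurePreserving_boxSplit μ).map_eq,
    integral_map measurable_boxSplit.aemeasurable hF.aestronglyMeasurable]
  exact integral_prod _ <| .of_bound (hF.comp measurable_boxSplit).aestronglyMeasurable _
    (ae_of_all _ fun z => norm_prod_le_pow_card _ fun ω _ => hC _)

end

theorem boxNorm_eq_zero_of_condexp_general (V : Type) [Fintype V] [DecidableEq V]
    (X : V → Type) [∀ v, MeasurableSpace (X v)]
    (μ : ∀ v, Measure (X v)) [∀ v, IsProbabilityMeasure (μ v)]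
    (f : (∀ v, X v) → ℝ) (hfb : ∃ C, ∀ x, |f x| ≤ C) (hfm : Measurable f)
    (h : MeasureTheory.condExp (cylAlgLt X) (Measure.pi μ) f =ᵐ[Measure.pi μ] 0) :
    boxNorm X μ f = 0 := by
  obtain ⟨C, hC⟩ := hfb
  have hC' : ∀ x, ‖f x‖ ≤ C := hC
  rw [boxNorm, boxInt_eq_integral_integral μ hfm hC',
    integral_eq_zero_of_ae (ae_of_all _ (integral_prod_boxVertex_eq_zero hfm hC' h))]
  exact Real.zero_rpow (by positivity)

/-- If `E[f | 𝒞_{<V}] = 0` `μ`-a.e. then `‖f‖_{□^V} = 0`. -/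
theorem boxNorm_eq_zero_of_condexp (V : Type) [Fintype V] [DecidableEq V] [Nonempty V]
    (X : V → Type) [∀ v, MeasurableSpace (X v)]
    (μ : ∀ v, Measure (X v)) [∀ v, IsProbabilityMeasure (μ v)]
    (f : (∀ v, X v) → ℝ) (hfb : ∃ C, ∀ x, |f x| ≤ C) (hfm : Measurable f)
    (h : MeasureTheory.condExp (cylAlgLt X) (Measure.pi μ) f =ᵐ[Measure.pi μ] 0) :
    boxNorm X μ f = 0 :=
  boxNorm_eq_zero_of_condexp_general V X μ f hfb hfm h
end

section
/- For every nonempty J ⊆ V and every bounded measurable f : X → ℝ, ∫_{X⁺_J} ∏_{ω∈{0,1}^J} f(x_{V∖J}, x_J^ω) dμ⁺_J ≥ 0. -/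
open MeasureTheory
open scoped Classical

noncomputable section

/-- Recombine `(x_{V∖J}, x_J^ω)` into a point of `X = ∏_v X_v`. -/
def recomb {V : Type} (X : V → Type) (J : Set V)
    (y : ∀ v : ↥(Jᶜ : Set V), X ↑v) (z : ∀ p : ↥J × Bool, X ↑p.1)
    (ω : ↥J → Bool) : ∀ v, X v := fun v =>
  if h : v ∈ J then z (⟨v, h⟩, ω ⟨v, h⟩) else y ⟨v, h⟩

/-- The integral `∫_{X⁺_J} ∏_{ω ∈ {0,1}^J} f(x_{V∖J}, x_J^ω) dμ⁺_J`. -/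
def UJint {V : Type} [Fintype V] [DecidableEq V] (X : V → Type)
    [∀ v, MeasurableSpace (X v)] (μ : ∀ v, Measure (X v)) (J : Set V)
    (f : (∀ v, X v) → ℝ) : ℝ :=
  ∫ p : (∀ v : ↥(Jᶜ : Set V), X ↑v) × (∀ q : ↥J × Bool, X ↑q.1),
    ∏ ω : ↥J → Bool, f (recomb X J p.1 p.2 ω)
    ∂((Measure.pi fun v : ↥(Jᶜ : Set V) => μ ↑v).prod
      (Measure.pi fun q : ↥J × Bool => μ ↑q.1))

/-!
Fix `k ∈ J`. The factor of the integrand indexed by `ω` sees the two copies `x_k^0, x_k^1` only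
through `x_k^{ω k}`, so grouping the `ω` according to `ω k` writes the integrand as
`G(x_k^0) * G(x_k^1)`, where `G` depends only on the remaining coordinates. Integrating the two
independent copies first gives `(∫ G dμ_k)² ≥ 0`, and Fubini does the rest; no boundedness or
measurability of `f` is needed, since without integrability the integral is `0`.
-/

section BoolPower

variable {A : Type*} [MeasurableSpace A]

theorem integral_mul_apply_false_apply_true {L : Type*} [RCLike L] (μ : Measure A)
    [SigmaFinite μ] (g h : A → L) :
    ∫ x, g (x false) * h (x true) ∂Measure.pi (fun _ : Bool => μ) =
      (∫ a, g a ∂μ) * ∫ a, h a ∂μ := by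
  have hpair : MeasurePreserving
      ((MeasurableEquiv.piCongrLeft (fun _ : Fin 2 => A) finTwoEquiv.symm).trans
        MeasurableEquiv.finTwoArrow)
      (Measure.pi fun _ : Bool => μ) (μ.prod μ) :=
    (measurePreserving_finTwoArrow μ).comp
      (measurePreserving_piCongrLeft (fun _ : Fin 2 => μ) finTwoEquiv.symm)
  rw [← integral_prod_mul, ← hpair.integral_comp']
  rfl

theorem integral_prod_mul_apply_false_apply_true_nonneg {Ω : Type*} [MeasurableSpace Ω]
    (ν : Measure Ω) [SFinite ν] (μ : Measure A) [SigmaFinite μ] (G : Ω → A → ℝ) :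
    0 ≤ ∫ p, G p.1 (p.2 false) * G p.1 (p.2 true) ∂ν.prod (Measure.pi fun _ : Bool => μ) := by
  by_cases hG : Integrable (fun p : Ω × (Bool → A) => G p.1 (p.2 false) * G p.1 (p.2 true))
      (ν.prod (Measure.pi fun _ : Bool => μ))
  · rw [integral_prod _ hG]
    refine integral_nonneg fun ω => ?_
    change 0 ≤ ∫ x : Bool → A, G ω (x false) * G ω (x true) ∂_
    rw [integral_mul_apply_false_apply_true]
    exact mul_self_nonneg _
  · -- the Bochner integral of a non-integrable function is `0`
    rw [integral_undef hG]

end BoolPower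

theorem Equiv.funSplitAt_symm_apply_self {α β : Type*} [DecidableEq α] (i : α) (b : β)
    (f : {j // j ≠ i} → β) : (Equiv.funSplitAt i β).symm (b, f) i = b :=
  dif_pos rfl

theorem Equiv.funSplitAt_symm_apply_of_ne {α β : Type*} [DecidableEq α] {i j : α} (h : j ≠ i)
    (b : β) (f : {j // j ≠ i} → β) : (Equiv.funSplitAt i β).symm (b, f) j = f ⟨j, h⟩ :=
  dif_neg h

section DoubledCoordinate

variable {κ : Type*} (k : κ)

def Equiv.boolEquivFstEq : Bool ≃ {q : κ × Bool // q.1 = k} where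
  toFun c := ⟨(k, c), rfl⟩
  invFun q := q.1.2
  left_inv _ := rfl
  right_inv q := Subtype.ext (Prod.ext q.2.symm rfl)

variable [DecidableEq κ] (X : κ → Type*) [∀ k, MeasurableSpace (X k)]

def MeasurableEquiv.piProdBoolSplitAt :
    (∀ q : κ × Bool, X q.1) ≃ᵐ (∀ q : {q : κ × Bool // q.1 ≠ k}, X q.1.1) × (Bool → X k) :=
  (MeasurableEquiv.piEquivPiSubtypeProd (fun q : κ × Bool => X q.1)
      (fun q : κ × Bool => q.1 = k)).trans <|
    MeasurableEquiv.prodComm.trans <| (MeasurableEquiv.refl _).prodCongr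
      (MeasurableEquiv.piCongrLeft (fun q : {q : κ × Bool // q.1 = k} => X q.1.1)
        (Equiv.boolEquivFstEq k)).symm

theorem MeasurableEquiv.piProdBoolSplitAt_symm_apply_self
    (w : ∀ q : {q : κ × Bool // q.1 ≠ k}, X q.1.1) (x : Bool → X k) (c : Bool) :
    (MeasurableEquiv.piProdBoolSplitAt k X).symm (w, x) (k, c) = x c :=
  congrFun (congrArg Prod.snd ((MeasurableEquiv.piProdBoolSplitAt k X).apply_symm_apply (w, x)))
    c

theorem MeasurableEquiv.piProdBoolSplitAt_symm_apply_of_ne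
    (w : ∀ q : {q : κ × Bool // q.1 ≠ k}, X q.1.1) (x : Bool → X k) (q : κ × Bool)
    (hq : q.1 ≠ k) :
    (MeasurableEquiv.piProdBoolSplitAt k X).symm (w, x) q = w ⟨q, hq⟩ :=
  congrFun (congrArg Prod.fst ((MeasurableEquiv.piProdBoolSplitAt k X).apply_symm_apply (w, x)))
    ⟨q, hq⟩

variable {X} in
theorem measurePreserving_piProdBoolSplitAt [Fintype κ] (μ : ∀ k, Measure (X k))
    [∀ k, SigmaFinite (μ k)] :
    MeasurePreserving (MeasurableEquiv.piProdBoolSplitAt k X)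
      (Measure.pi fun q : κ × Bool => μ q.1)
      ((Measure.pi fun q : {q : κ × Bool // q.1 ≠ k} => μ q.1.1).prod
        (Measure.pi fun _ : Bool => μ k)) :=
  ((MeasurePreserving.id _).prod
      (measurePreserving_piCongrLeft (fun q : {q : κ × Bool // q.1 = k} => μ q.1.1)
        (Equiv.boolEquivFstEq k)).symm).comp <|
    Measure.measurePreserving_swap.comp <|
      measurePreserving_piEquivPiSubtypeProd (fun q : κ × Bool => μ q.1)
        (fun q : κ × Bool => q.1 = k)

end DoubledCoordinate

section Recomb

variable {V : Type} (X : V → Type) (J : Set V)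

theorem recomb_congr (y : ∀ v : ↥(Jᶜ : Set V), X ↑v) {z z' : ∀ q : ↥J × Bool, X ↑q.1}
    {ω ω' : ↥J → Bool} (h : ∀ j, z (j, ω j) = z' (j, ω' j)) :
    recomb X J y z ω = recomb X J y z' ω' := by
  funext v
  unfold recomb
  split_ifs
  exacts [h _, rfl]

variable [DecidableEq V] [∀ v, MeasurableSpace (X v)]

theorem recomb_funSplitAt_symm (k : ↥J) (y : ∀ v : ↥(Jᶜ : Set V), X ↑v)
    (z : ∀ q : ↥J × Bool, X ↑q.1) (c : Bool) (ω : {j // j ≠ k} → Bool) :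
    recomb X J y z ((Equiv.funSplitAt k Bool).symm (c, ω)) =
      recomb X J y ((MeasurableEquiv.piProdBoolSplitAt k (fun j : ↥J => X j)).symm
        ((MeasurableEquiv.piProdBoolSplitAt k (fun j : ↥J => X j) z).1, fun _ => z (k, c)))
        ((Equiv.funSplitAt k Bool).symm (false, ω)) := by
  refine recomb_congr X J y fun j => ?_
  by_cases hj : j = k
  · subst hj
    rw [Equiv.funSplitAt_symm_apply_self, Equiv.funSplitAt_symm_apply_self,
      MeasurableEquiv.piProdBoolSplitAt_symm_apply_self]
  · rw [Equiv.funSplitAt_symm_apply_of_ne hj, Equiv.funSplitAt_symm_apply_of_ne hj,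
      MeasurableEquiv.piProdBoolSplitAt_symm_apply_of_ne _ _ _ _ _ hj]
    rfl

variable [Fintype V]

/-- The factor `G(t)` of the header at the point `p` of the remaining coordinates: the product of
the factors with `ω k = false`, taken where both copies of coordinate `k` equal `t`. -/
def recombFactor (f : (∀ v, X v) → ℝ) (k : ↥J)
    (p : (∀ v : ↥(Jᶜ : Set V), X ↑v) × (∀ q : {q : ↥J × Bool // q.1 ≠ k}, X ↑q.1.1))
    (t : X k) : ℝ :=
  ∏ ω : {j // j ≠ k} → Bool, f (recomb X J p.1
    ((MeasurableEquiv.piProdBoolSplitAt k (fun j : ↥J => X j)).symm (p.2, fun _ => t))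
    ((Equiv.funSplitAt k Bool).symm (false, ω)))

theorem prod_recomb_eq_recombFactor_mul (f : (∀ v, X v) → ℝ) (k : ↥J)
    (y : ∀ v : ↥(Jᶜ : Set V), X ↑v) (z : ∀ q : ↥J × Bool, X ↑q.1) :
    ∏ ω, f (recomb X J y z ω) =
      recombFactor X J f k (y, (MeasurableEquiv.piProdBoolSplitAt k (fun j : ↥J => X j) z).1)
          (z (k, false)) *
        recombFactor X J f k (y, (MeasurableEquiv.piProdBoolSplitAt k (fun j : ↥J => X j) z).1)
          (z (k, true)) := by
  have hfiber (c : Bool) : ∏ ω, f (recomb X J y z ((Equiv.funSplitAt k Bool).symm (c, ω))) =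
      recombFactor X J f k (y, (MeasurableEquiv.piProdBoolSplitAt k (fun j : ↥J => X j) z).1)
        (z (k, c)) :=
    Finset.prod_congr rfl fun ω _ => congrArg f (recomb_funSplitAt_symm X J k y z c ω)
  rw [← (Equiv.funSplitAt k Bool).symm.prod_comp, Fintype.prod_prod_type, Fintype.prod_bool,
    hfiber, hfiber, mul_comm]

end Recomb

theorem UJint_eq_integral_recombFactor_mul {V : Type} [Fintype V] [DecidableEq V]
    (X : V → Type) [∀ v, MeasurableSpace (X v)] (μ : ∀ v, Measure (X v))
    [∀ v, SigmaFinite (μ v)] (J : Set V) (f : (∀ v, X v) → ℝ) (k : ↥J) :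
    UJint X μ J f =
      ∫ p, recombFactor X J f k p.1 (p.2 false) * recombFactor X J f k p.1 (p.2 true)
      ∂((Measure.pi fun v : ↥(Jᶜ : Set V) => μ ↑v).prod
        (Measure.pi fun q : {q : ↥J × Bool // q.1 ≠ k} => μ ↑q.1.1)).prod
          (Measure.pi fun _ : Bool => μ k) := by
  let E := ((MeasurableEquiv.refl (∀ v : ↥(Jᶜ : Set V), X ↑v)).prodCongr
      (MeasurableEquiv.piProdBoolSplitAt k (fun j : ↥J => X j))).trans
    MeasurableEquiv.prodAssoc.symm
  have hE : MeasurePreserving E _ _ :=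
    ((measurePreserving_prodAssoc _ _ _).symm MeasurableEquiv.prodAssoc).comp
      ((MeasurePreserving.id (Measure.pi fun v : ↥(Jᶜ : Set V) => μ ↑v)).prod
        (measurePreserving_piProdBoolSplitAt k fun j : ↥J => μ j))
  rw [← hE.integral_comp']
  exact integral_congr_ae (ae_of_all _ fun p => prod_recomb_eq_recombFactor_mul X J f k p.1 p.2)

theorem UJint_nonneg_general (V : Type) [Fintype V] [DecidableEq V]
    (X : V → Type) [∀ v, MeasurableSpace (X v)]
    (μ : ∀ v, Measure (X v)) [∀ v, IsProbabilityMeasure (μ v)]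
    (J : Set V) (hJ : J.Nonempty)
    (f : (∀ v, X v) → ℝ) :
    0 ≤ UJint X μ J f := by
  obtain ⟨j, hj⟩ := hJ
  rw [UJint_eq_integral_recombFactor_mul X μ J f ⟨j, hj⟩]
  exact integral_prod_mul_apply_false_apply_true_nonneg _ _ _

/-- For nonempty `J ⊆ V` and bounded measurable `f`,
`∫_{X⁺_J} ∏_{ω ∈ {0,1}^J} f(x_{V∖J}, x_J^ω) dμ⁺_J ≥ 0`. -/
theorem UJint_nonneg (V : Type) [Fintype V] [DecidableEq V] [Nonempty V]
    (X : V → Type) [∀ v, MeasurableSpace (X v)]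
    (μ : ∀ v, Measure (X v)) [∀ v, IsProbabilityMeasure (μ v)]
    (J : Set V) (hJ : J.Nonempty)
    (f : (∀ v, X v) → ℝ) (hfb : ∃ C, ∀ x, |f x| ≤ C) (hfm : Measurable f) :
    0 ≤ UJint X μ J f :=
  UJint_nonneg_general V X μ J hJ f

end
end
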